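/- arXiv:0804.2795 — 7 statements merged into one kernel-verified Lean document; each statement's English description precedes it below -/
import Mathlib

section
/- If φ₁ and φ₂ are both functions from [0,1/2] to ℝ that are continuously differentiable on [0,1/2], three times continuously differentiable on (0,1/2), positive on (0,1/2), and satisfy φᵢ(0) = φᵢ(1/2) = 0, φᵢ'(0) = 1, and φᵢ(η)·φᵢ'''(η) = 1 for all η ∈ (0,1/2) (i = 1, 2), then φ₁ = φ₂ on [0,1/2]. -/
/-!
With `u = φ₁ - φ₂`, the energy `E = u u'' - u'²/2` has `E' = u u''' = -u²/(φ₁ φ₂) ≤ 0`.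
At `0⁺` both profiles grow like `x` and `E → 0`, whence `E ≤ 0`. If `E(x) < 0`, then near `1/2`
the function `u²` would be uniformly concave while `u²` and `(u²)'` tend to `0`, which forces
`u² < 0`; so `E ≥ 0`. Then `E ≡ 0`, hence `u ≡ 0`.

The boundary behaviour comes from the first integral `φ φ'' = φ'²/2 + x - 1/2` and a l'Hôpital
argument: if `f` vanishes at an endpoint `a` where `f'` has a finite limit `s`, then
`f f' / (x - a)` tends both to `s²` and to `s² + lim f f''`, so `f f''` can only tend to `0`.
At `0` this fixes the constant of the first integral; at `1/2` it gives zero contact angle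
`φ'(1/2) = 0`.
-/

/-- The traveling-wave profile problem (0.2) with d = 1/2. -/
def IsTWProfile (φ : ℝ → ℝ) : Prop :=
  ContDiffOn ℝ 1 φ (Set.Icc 0 (1/2)) ∧
  ContDiffOn ℝ 3 φ (Set.Ioo 0 (1/2)) ∧
  (∀ η ∈ Set.Ioo (0:ℝ) (1/2), 0 < φ η) ∧
  φ 0 = 0 ∧ φ (1/2) = 0 ∧
  derivWithin φ (Set.Icc 0 (1/2)) 0 = 1 ∧
  (∀ η ∈ Set.Ioo (0:ℝ) (1/2), φ η * deriv (deriv (deriv φ)) η = 1)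

open Set Filter Topology

section MonotoneLimits

variable {f f' f'' : ℝ → ℝ} {a b x L : ℝ}

theorem antitoneOn_Ioo_of_hasDerivAt_nonpos (hf : ∀ y ∈ Ioo a b, HasDerivAt f (f' y) y)
    (hf' : ∀ y ∈ Ioo a b, f' y ≤ 0) : AntitoneOn f (Ioo a b) :=
  antitoneOn_of_hasDerivWithinAt_nonpos (convex_Ioo a b)
    (fun y hy => (hf y hy).continuousAt.continuousWithinAt)
    (by simpa only [interior_Ioo] using fun y hy => (hf y hy).hasDerivWithinAt)
    (by simpa only [interior_Ioo] using hf')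

theorem AntitoneOn.le_of_tendsto_nhdsGT (hf : AntitoneOn f (Ioo a b))
    (hL : Tendsto f (𝓝[>] a) (𝓝 L)) (hx : x ∈ Ioo a b) : f x ≤ L :=
  ge_of_tendsto hL <| by
    filter_upwards [Ioo_mem_nhdsGT hx.1] with y hy using hf ⟨hy.1, hy.2.trans hx.2⟩ hx hy.2.le

theorem AntitoneOn.ge_of_tendsto_nhdsLT (hf : AntitoneOn f (Ioo a b))
    (hL : Tendsto f (𝓝[<] b) (𝓝 L)) (hx : x ∈ Ioo a b) : L ≤ f x :=
  le_of_tendsto hL <| by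
    filter_upwards [Ioo_mem_nhdsLT hx.2] with y hy using hf hx ⟨hx.1.trans hy.1, hy.2⟩ hy.1.le

theorem nonpos_of_deriv2_nonpos_of_tendsto_nhdsLT
    (hf : ∀ y ∈ Ioo a b, HasDerivAt f (f' y) y) (hf' : ∀ y ∈ Ioo a b, HasDerivAt f' (f'' y) y)
    (hf'' : ∀ y ∈ Ioo a b, f'' y ≤ 0) (h0 : Tendsto f (𝓝[<] b) (𝓝 0))
    (h0' : Tendsto f' (𝓝[<] b) (𝓝 0)) (hx : x ∈ Ioo a b) : f x ≤ 0 := by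
  have hslope : ∀ y ∈ Ioo a b, 0 ≤ f' y := fun y hy =>
    (antitoneOn_Ioo_of_hasDerivAt_nonpos hf' hf'').ge_of_tendsto_nhdsLT h0' hy
  have hanti : AntitoneOn (fun y => -f y) (Ioo a b) :=
    antitoneOn_Ioo_of_hasDerivAt_nonpos (fun y hy => (hf y hy).neg)
      (fun y hy => neg_nonpos.2 (hslope y hy))
  exact neg_nonneg.1 (hanti.ge_of_tendsto_nhdsLT (by simpa using h0.neg) hx)

theorem neg_of_deriv2_le_neg_of_tendsto_nhdsLT {ε : ℝ} (hε : 0 < ε)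
    (hf : ∀ y ∈ Ioo a b, HasDerivAt f (f' y) y) (hf' : ∀ y ∈ Ioo a b, HasDerivAt f' (f'' y) y)
    (hf'' : ∀ y ∈ Ioo a b, f'' y ≤ -ε) (h0 : Tendsto f (𝓝[<] b) (𝓝 0))
    (h0' : Tendsto f' (𝓝[<] b) (𝓝 0)) (hx : x ∈ Ioo a b) : f x < 0 := by
  have hq : ∀ y, HasDerivAt (fun y => ε / 2 * (y - b) ^ 2) (ε * (y - b)) y := fun y =>
    ((((hasDerivAt_id y).sub_const b).pow 2).const_mul (ε / 2)).congr_deriv (by simp; ring)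
  have hq' : ∀ y, HasDerivAt (fun y => ε * (y - b)) ε y := fun y => by
    simpa using ((hasDerivAt_id y).sub_const b).const_mul ε
  have hcont : Continuous fun y => ε / 2 * (y - b) ^ 2 := by fun_prop
  have hcont' : Continuous fun y => ε * (y - b) := by fun_prop
  have hle := nonpos_of_deriv2_nonpos_of_tendsto_nhdsLT (f := fun y => f y + ε / 2 * (y - b) ^ 2)
    (f' := fun y => f' y + ε * (y - b)) (f'' := fun y => f'' y + ε)
    (fun y hy => (hf y hy).add (hq y)) (fun y hy => (hf' y hy).add (hq' y))
    (fun y hy => by linarith [hf'' y hy])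
    (by simpa using h0.add ((hcont.tendsto b).mono_left nhdsWithin_le_nhds))
    (by simpa using h0'.add ((hcont'.tendsto b).mono_left nhdsWithin_le_nhds)) hx
  have hq_pos : 0 < ε / 2 * (x - b) ^ 2 := by
    have := sub_ne_zero.2 hx.2.ne
    positivity
  linarith

end MonotoneLimits

section Endpoint

variable {f f' f'' : ℝ → ℝ} {a s m : ℝ}

theorem eq_zero_of_tendsto_mul_deriv2_nhdsGT
    (hf : ∀ᶠ x in 𝓝[>] a, HasDerivAt f (f' x) x) (hf' : ∀ᶠ x in 𝓝[>] a, HasDerivAt f' (f'' x) x)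
    (h0 : Tendsto f (𝓝[>] a) (𝓝 0)) (hs : Tendsto f' (𝓝[>] a) (𝓝 s))
    (hm : Tendsto (fun x => f x * f'' x) (𝓝[>] a) (𝓝 m)) : m = 0 := by
  have hid : ∀ᶠ x in 𝓝[>] a, HasDerivAt (fun x => x - a) 1 x :=
    Eventually.of_forall fun x => (hasDerivAt_id x).sub_const a
  have hid0 : Tendsto (fun x => x - a) (𝓝[>] a) (𝓝 0) :=
    tendsto_nhdsWithin_of_tendsto_nhds (by simpa using (continuous_sub_right a).tendsto a)
  have hslope : Tendsto (fun x => f x / (x - a)) (𝓝[>] a) (𝓝 s) :=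
    HasDerivAt.lhopital_zero_nhdsGT hf hid (by simp) h0 hid0 (by simpa using hs)
  have h₁ : Tendsto (fun x => f x * f' x / (x - a)) (𝓝[>] a) (𝓝 (s * s)) :=
    (hslope.mul hs).congr fun x => by ring
  have h₂ : Tendsto (fun x => f x * f' x / (x - a)) (𝓝[>] a) (𝓝 (s * s + m)) :=
    HasDerivAt.lhopital_zero_nhdsGT (hf.mp (hf'.mono fun x h₂ h₁ => h₁.mul h₂)) hid (by simp)
      (by simpa using h0.mul hs) hid0 (by simpa using (hs.mul hs).add hm)
  linarith [tendsto_nhds_unique h₁ h₂]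

theorem eq_zero_of_tendsto_mul_deriv2_nhdsLT
    (hf : ∀ᶠ x in 𝓝[<] a, HasDerivAt f (f' x) x) (hf' : ∀ᶠ x in 𝓝[<] a, HasDerivAt f' (f'' x) x)
    (h0 : Tendsto f (𝓝[<] a) (𝓝 0)) (hs : Tendsto f' (𝓝[<] a) (𝓝 s))
    (hm : Tendsto (fun x => f x * f'' x) (𝓝[<] a) (𝓝 m)) : m = 0 := by
  have hid : ∀ᶠ x in 𝓝[<] a, HasDerivAt (fun x => x - a) 1 x :=
    Eventually.of_forall fun x => (hasDerivAt_id x).sub_const a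
  have hid0 : Tendsto (fun x => x - a) (𝓝[<] a) (𝓝 0) :=
    tendsto_nhdsWithin_of_tendsto_nhds (by simpa using (continuous_sub_right a).tendsto a)
  have hslope : Tendsto (fun x => f x / (x - a)) (𝓝[<] a) (𝓝 s) :=
    HasDerivAt.lhopital_zero_nhdsLT hf hid (by simp) h0 hid0 (by simpa using hs)
  have h₁ : Tendsto (fun x => f x * f' x / (x - a)) (𝓝[<] a) (𝓝 (s * s)) :=
    (hslope.mul hs).congr fun x => by ring
  have h₂ : Tendsto (fun x => f x * f' x / (x - a)) (𝓝[<] a) (𝓝 (s * s + m)) :=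
    HasDerivAt.lhopital_zero_nhdsLT (hf.mp (hf'.mono fun x h₂ h₁ => h₁.mul h₂)) hid (by simp)
      (by simpa using h0.mul hs) hid0 (by simpa using (hs.mul hs).add hm)
  linarith [tendsto_nhds_unique h₁ h₂]

end Endpoint

namespace IsTWProfile

variable {φ : ℝ → ℝ} {x y : ℝ}

theorem pos (h : IsTWProfile φ) (hx : x ∈ Ioo (0:ℝ) (1/2)) : 0 < φ x := h.2.2.1 x hx

theorem hasDerivAt (h : IsTWProfile φ) (hx : x ∈ Ioo (0:ℝ) (1/2)) :
    HasDerivAt φ (deriv φ x) x :=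
  ((h.2.1.contDiffAt (isOpen_Ioo.mem_nhds hx)).differentiableAt (by norm_num)).hasDerivAt

theorem hasDerivAt_deriv (h : IsTWProfile φ) (hx : x ∈ Ioo (0:ℝ) (1/2)) :
    HasDerivAt (deriv φ) (deriv (deriv φ) x) x :=
  (((h.2.1.deriv_of_isOpen isOpen_Ioo (m := 2) (by norm_num)).contDiffAt
    (isOpen_Ioo.mem_nhds hx)).differentiableAt (by norm_num)).hasDerivAt

theorem hasDerivAt_deriv2 (h : IsTWProfile φ) (hx : x ∈ Ioo (0:ℝ) (1/2)) :
    HasDerivAt (deriv (deriv φ)) (φ x)⁻¹ x := by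
  have hd3 := ((((h.2.1.deriv_of_isOpen isOpen_Ioo (m := 2) (by norm_num)).deriv_of_isOpen
    isOpen_Ioo (m := 1) (by norm_num)).contDiffAt
    (isOpen_Ioo.mem_nhds hx)).differentiableAt (by norm_num)).hasDerivAt
  rwa [eq_inv_of_mul_eq_one_right (h.2.2.2.2.2.2 x hx)] at hd3

theorem tendsto_nhdsWithin_Ioo (h : IsTWProfile φ) (hy : y ∈ Icc (0:ℝ) (1/2)) :
    Tendsto φ (𝓝[Ioo 0 (1/2)] y) (𝓝 (φ y)) :=
  ((h.1.continuousOn y hy).mono Ioo_subset_Icc_self).tendsto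

theorem tendsto_deriv_nhdsWithin_Ioo (h : IsTWProfile φ) (hy : y ∈ Icc (0:ℝ) (1/2)) :
    Tendsto (deriv φ) (𝓝[Ioo 0 (1/2)] y) (𝓝 (derivWithin φ (Icc 0 (1/2)) y)) := by
  have hcont := h.1.continuousOn_derivWithin (uniqueDiffOn_Icc (by norm_num)) le_rfl y hy
  refine ((hcont.mono Ioo_subset_Icc_self).tendsto).congr' ?_
  filter_upwards [self_mem_nhdsWithin] with z hz
  exact derivWithin_of_mem_nhds (Icc_mem_nhds hz.1 hz.2)

theorem tendsto_nhdsGT_zero (h : IsTWProfile φ) : Tendsto φ (𝓝[>] 0) (𝓝 0) := by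
  have hlim := h.tendsto_nhdsWithin_Ioo (y := 0) (by norm_num)
  rwa [nhdsWithin_Ioo_eq_nhdsGT (by norm_num), h.2.2.2.1] at hlim

theorem tendsto_nhdsLT_half (h : IsTWProfile φ) : Tendsto φ (𝓝[<] (1/2)) (𝓝 0) := by
  have hlim := h.tendsto_nhdsWithin_Ioo (y := 1/2) (by norm_num)
  rwa [nhdsWithin_Ioo_eq_nhdsLT (by norm_num), h.2.2.2.2.1] at hlim

theorem tendsto_deriv_nhdsGT_zero (h : IsTWProfile φ) : Tendsto (deriv φ) (𝓝[>] 0) (𝓝 1) := by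
  have hlim := h.tendsto_deriv_nhdsWithin_Ioo (y := 0) (by norm_num)
  rwa [nhdsWithin_Ioo_eq_nhdsGT (by norm_num), h.2.2.2.2.2.1] at hlim

theorem mul_deriv2_eq (h : IsTWProfile φ) (hx : x ∈ Ioo (0:ℝ) (1/2)) :
    φ x * deriv (deriv φ) x = deriv φ x ^ 2 / 2 + x - 1/2 := by
  set G : ℝ → ℝ := fun t => φ t * deriv (deriv φ) t - deriv φ t ^ 2 / 2 - t
  have hG : ∀ t ∈ Ioo (0:ℝ) (1/2), HasDerivAt G 0 t := fun t ht => by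
    have hφ := (h.pos ht).ne'
    refine ((((h.hasDerivAt ht).mul (h.hasDerivAt_deriv2 ht)).sub
      (((h.hasDerivAt_deriv ht).pow 2).div_const 2)).sub (hasDerivAt_id t)).congr_deriv ?_
    field_simp
    ring
  obtain ⟨c, hc⟩ := isOpen_Ioo.exists_is_const_of_deriv_eq_zero isPreconnected_Ioo
    (fun t ht => (hG t ht).differentiableAt.differentiableWithinAt) (fun t ht => (hG t ht).deriv)
  have hIoo : Ioo (0:ℝ) (1/2) ∈ 𝓝[>] 0 := Ioo_mem_nhdsGT (by norm_num)
  have hlim : Tendsto (fun t => φ t * deriv (deriv φ) t) (𝓝[>] 0) (𝓝 (c + 1 ^ 2 / 2 + 0)) := by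
    refine ((tendsto_const_nhds.add ((h.tendsto_deriv_nhdsGT_zero.pow 2).div_const 2)).add
      (tendsto_nhdsWithin_of_tendsto_nhds tendsto_id)).congr' ?_
    filter_upwards [hIoo] with t ht
    have hGt : G t = c := hc t ht
    simp only [G, id] at hGt ⊢
    linarith
  have hc' := eq_zero_of_tendsto_mul_deriv2_nhdsGT
    (mem_of_superset hIoo fun t ht => h.hasDerivAt ht)
    (mem_of_superset hIoo fun t ht => h.hasDerivAt_deriv ht)
    h.tendsto_nhdsGT_zero h.tendsto_deriv_nhdsGT_zero hlim
  have hGx : G x = c := hc x hx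
  simp only [G] at hGx
  linarith

theorem tendsto_mul_deriv2_nhdsGT_zero (h : IsTWProfile φ) :
    Tendsto (fun x => φ x * deriv (deriv φ) x) (𝓝[>] 0) (𝓝 0) := by
  have hlim : Tendsto (fun x => deriv φ x ^ 2 / 2 + x - 1/2) (𝓝[>] 0) (𝓝 (1 ^ 2 / 2 + 0 - 1/2)) :=
    (((h.tendsto_deriv_nhdsGT_zero.pow 2).div_const 2).add
      (tendsto_nhdsWithin_of_tendsto_nhds tendsto_id)).sub_const _
  norm_num at hlim
  refine hlim.congr' ?_
  filter_upwards [Ioo_mem_nhdsGT (by norm_num : (0:ℝ) < 1/2)] with x hx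
  exact (h.mul_deriv2_eq hx).symm

theorem tendsto_deriv_nhdsLT_half (h : IsTWProfile φ) :
    Tendsto (deriv φ) (𝓝[<] (1/2)) (𝓝 0) := by
  have hlim := h.tendsto_deriv_nhdsWithin_Ioo (y := 1/2) (by norm_num)
  rw [nhdsWithin_Ioo_eq_nhdsLT (by norm_num)] at hlim
  set σ := derivWithin φ (Icc 0 (1/2)) (1/2)
  have hIoo : Ioo (0:ℝ) (1/2) ∈ 𝓝[<] (1/2) := Ioo_mem_nhdsLT (by norm_num)
  have hprod : Tendsto (fun x => φ x * deriv (deriv φ) x) (𝓝[<] (1/2))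
      (𝓝 (σ ^ 2 / 2 + 1/2 - 1/2)) := by
    refine ((((hlim.pow 2).div_const 2).add
      (tendsto_nhdsWithin_of_tendsto_nhds tendsto_id)).sub_const _).congr' ?_
    filter_upwards [hIoo] with x hx
    exact (h.mul_deriv2_eq hx).symm
  have hσ := eq_zero_of_tendsto_mul_deriv2_nhdsLT
    (mem_of_superset hIoo fun t ht => h.hasDerivAt ht)
    (mem_of_superset hIoo fun t ht => h.hasDerivAt_deriv ht)
    h.tendsto_nhdsLT_half hlim hprod
  rwa [show σ = 0 by nlinarith [sq_nonneg σ]] at hlim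

end IsTWProfile

noncomputable def diffEnergy (φ₁ φ₂ : ℝ → ℝ) (x : ℝ) : ℝ :=
  (φ₁ x - φ₂ x) * (deriv (deriv φ₁) x - deriv (deriv φ₂) x) - (deriv φ₁ x - deriv φ₂ x) ^ 2 / 2

namespace IsTWProfile

variable {φ₁ φ₂ : ℝ → ℝ} {x : ℝ}

theorem hasDerivAt_diffEnergy (h₁ : IsTWProfile φ₁) (h₂ : IsTWProfile φ₂)
    (hx : x ∈ Ioo (0:ℝ) (1/2)) :
    HasDerivAt (diffEnergy φ₁ φ₂) (-((φ₁ x - φ₂ x) ^ 2 / (φ₁ x * φ₂ x))) x := by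
  have hp₁ := (h₁.pos hx).ne'
  have hp₂ := (h₂.pos hx).ne'
  refine ((((h₁.hasDerivAt hx).sub (h₂.hasDerivAt hx)).mul
    ((h₁.hasDerivAt_deriv2 hx).sub (h₂.hasDerivAt_deriv2 hx))).sub
    ((((h₁.hasDerivAt_deriv hx).sub (h₂.hasDerivAt_deriv hx)).pow 2).div_const 2)).congr_deriv ?_
  simp only [Pi.sub_apply]
  field_simp
  ring

theorem hasDerivAt_sq_sub (h₁ : IsTWProfile φ₁) (h₂ : IsTWProfile φ₂)
    (hx : x ∈ Ioo (0:ℝ) (1/2)) :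
    HasDerivAt (fun t => (φ₁ t - φ₂ t) ^ 2) (2 * (φ₁ x - φ₂ x) * (deriv φ₁ x - deriv φ₂ x)) x :=
  (((h₁.hasDerivAt hx).sub (h₂.hasDerivAt hx)).pow 2).congr_deriv
    (by simp only [Pi.sub_apply]; ring)

theorem hasDerivAt_mul_sub_deriv_sub (h₁ : IsTWProfile φ₁) (h₂ : IsTWProfile φ₂)
    (hx : x ∈ Ioo (0:ℝ) (1/2)) :
    HasDerivAt (fun t => 2 * (φ₁ t - φ₂ t) * (deriv φ₁ t - deriv φ₂ t))
      (2 * (deriv φ₁ x - deriv φ₂ x) ^ 2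
        + 2 * (φ₁ x - φ₂ x) * (deriv (deriv φ₁) x - deriv (deriv φ₂) x)) x :=
  ((((h₁.hasDerivAt hx).sub (h₂.hasDerivAt hx)).const_mul 2).mul
    ((h₁.hasDerivAt_deriv hx).sub (h₂.hasDerivAt_deriv hx))).congr_deriv
    (by simp only [Pi.sub_apply]; ring)

theorem antitoneOn_diffEnergy (h₁ : IsTWProfile φ₁) (h₂ : IsTWProfile φ₂) :
    AntitoneOn (diffEnergy φ₁ φ₂) (Ioo 0 (1/2)) :=
  antitoneOn_Ioo_of_hasDerivAt_nonpos (fun _ hy => h₁.hasDerivAt_diffEnergy h₂ hy) fun y hy => by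
    have := h₁.pos hy
    have := h₂.pos hy
    exact neg_nonpos.2 (by positivity)

theorem tendsto_div_nhdsGT_zero (h₁ : IsTWProfile φ₁) (h₂ : IsTWProfile φ₂) :
    Tendsto (fun x => φ₂ x / φ₁ x) (𝓝[>] 0) (𝓝 1) := by
  have hIoo : Ioo (0:ℝ) (1/2) ∈ 𝓝[>] 0 := Ioo_mem_nhdsGT (by norm_num)
  refine HasDerivAt.lhopital_zero_nhdsGT (mem_of_superset hIoo fun t ht => h₂.hasDerivAt ht)
    (mem_of_superset hIoo fun t ht => h₁.hasDerivAt ht)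
    (h₁.tendsto_deriv_nhdsGT_zero.eventually_ne one_ne_zero)
    h₂.tendsto_nhdsGT_zero h₁.tendsto_nhdsGT_zero ?_
  have hdiv := h₂.tendsto_deriv_nhdsGT_zero.div h₁.tendsto_deriv_nhdsGT_zero one_ne_zero
  rwa [div_one] at hdiv

theorem tendsto_diffEnergy_nhdsGT_zero (h₁ : IsTWProfile φ₁) (h₂ : IsTWProfile φ₂) :
    Tendsto (diffEnergy φ₁ φ₂) (𝓝[>] 0) (𝓝 0) := by
  have h1 : Tendsto (fun _ : ℝ => (1:ℝ)) (𝓝[>] 0) (𝓝 1) := tendsto_const_nhds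
  have hlim : Tendsto (fun x => (1 - φ₂ x / φ₁ x) * (φ₁ x * deriv (deriv φ₁) x)
      + (1 - φ₁ x / φ₂ x) * (φ₂ x * deriv (deriv φ₂) x) - (deriv φ₁ x - deriv φ₂ x) ^ 2 / 2)
      (𝓝[>] 0) (𝓝 ((1 - 1) * 0 + (1 - 1) * 0 - (1 - 1) ^ 2 / 2)) :=
    (((h1.sub (h₁.tendsto_div_nhdsGT_zero h₂)).mul h₁.tendsto_mul_deriv2_nhdsGT_zero).add
      ((h1.sub (h₂.tendsto_div_nhdsGT_zero h₁)).mul h₂.tendsto_mul_deriv2_nhdsGT_zero)).sub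
      (((h₁.tendsto_deriv_nhdsGT_zero.sub h₂.tendsto_deriv_nhdsGT_zero).pow 2).div_const 2)
  norm_num at hlim
  refine hlim.congr' ?_
  filter_upwards [Ioo_mem_nhdsGT (by norm_num : (0:ℝ) < 1/2)] with x hx
  have hp₁ := (h₁.pos hx).ne'
  have hp₂ := (h₂.pos hx).ne'
  simp only [diffEnergy]
  field_simp
  ring

theorem diffEnergy_nonpos (h₁ : IsTWProfile φ₁) (h₂ : IsTWProfile φ₂)
    (hx : x ∈ Ioo (0:ℝ) (1/2)) : diffEnergy φ₁ φ₂ x ≤ 0 :=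
  (h₁.antitoneOn_diffEnergy h₂).le_of_tendsto_nhdsGT (h₁.tendsto_diffEnergy_nhdsGT_zero h₂) hx

/-- `(u²)'' = 2u'² + 2u u'' = 3u'² + 2E`, and `E ≤ E(x) < 0` on `(x, 1/2)` while `u' → 0`. -/
theorem diffEnergy_nonneg (h₁ : IsTWProfile φ₁) (h₂ : IsTWProfile φ₂)
    (hx : x ∈ Ioo (0:ℝ) (1/2)) : 0 ≤ diffEnergy φ₁ φ₂ x := by
  by_contra! hneg
  set ε := -diffEnergy φ₁ φ₂ x
  have hε : 0 < ε := neg_pos.2 hneg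
  have hu : Tendsto (fun t => φ₁ t - φ₂ t) (𝓝[<] (1/2)) (𝓝 0) := by
    simpa using h₁.tendsto_nhdsLT_half.sub h₂.tendsto_nhdsLT_half
  have hu' : Tendsto (fun t => deriv φ₁ t - deriv φ₂ t) (𝓝[<] (1/2)) (𝓝 0) := by
    simpa using h₁.tendsto_deriv_nhdsLT_half.sub h₂.tendsto_deriv_nhdsLT_half
  have hsmall : ∀ᶠ t in 𝓝[<] (1/2), 3 * (deriv φ₁ t - deriv φ₂ t) ^ 2 < ε :=
    ((hu'.pow 2).const_mul 3).eventually_lt_const (by norm_num; exact hε)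
  obtain ⟨c, hc : c < 1/2, hcsub⟩ := mem_nhdsLT_iff_exists_Ioo_subset.1
    (inter_mem (Ioo_mem_nhdsLT hx.2) hsmall)
  have hI : ∀ t ∈ Ioo c (1/2), t ∈ Ioo (0:ℝ) (1/2) := fun t ht =>
    ⟨hx.1.trans (hcsub ht).1.1, ht.2⟩
  obtain ⟨t₀, ht₀⟩ := exists_between hc
  have hv := neg_of_deriv2_le_neg_of_tendsto_nhdsLT (a := c) hε
    (fun t ht => h₁.hasDerivAt_sq_sub h₂ (hI t ht))
    (fun t ht => h₁.hasDerivAt_mul_sub_deriv_sub h₂ (hI t ht))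
    (fun t ht => by
      have hE := (h₁.antitoneOn_diffEnergy h₂) hx (hI t ht) (hcsub ht).1.1.le
      have hu't : 3 * (deriv φ₁ t - deriv φ₂ t) ^ 2 < ε := (hcsub ht).2
      simp only [diffEnergy, ε] at hE hu't ⊢
      linarith)
    (by simpa using hu.pow 2) (by simpa using (hu.const_mul 2).mul hu') ht₀
  exact (sq_nonneg _).not_gt hv

theorem eqOn_Ioo (h₁ : IsTWProfile φ₁) (h₂ : IsTWProfile φ₂) : EqOn φ₁ φ₂ (Ioo 0 (1/2)) := by
  intro x hx
  have hE : diffEnergy φ₁ φ₂ =ᶠ[𝓝 x] fun _ => 0 :=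
    eventually_of_mem (isOpen_Ioo.mem_nhds hx) fun y hy =>
      le_antisymm (h₁.diffEnergy_nonpos h₂ hy) (h₁.diffEnergy_nonneg h₂ hy)
  have hderiv := (h₁.hasDerivAt_diffEnergy h₂ hx).unique
    ((hasDerivAt_const x (0:ℝ)).congr_of_eventuallyEq hE)
  simpa [sub_eq_zero, (h₁.pos hx).ne', (h₂.pos hx).ne'] using hderiv

end IsTWProfile

/-- Uniqueness part of Theorem 1: any two traveling-wave profiles coincide on `[0,1/2]`. -/
theorem traveling_wave_profile_unique (φ₁ φ₂ : ℝ → ℝ)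
    (h₁ : IsTWProfile φ₁) (h₂ : IsTWProfile φ₂) :
    Set.EqOn φ₁ φ₂ (Set.Icc 0 (1/2)) := by
  intro x hx
  rcases eq_endpoints_or_mem_Ioo_of_mem_Icc hx with rfl | rfl | hx
  · rw [h₁.2.2.2.1, h₂.2.2.2.1]
  · rw [h₁.2.2.2.2.1, h₂.2.2.2.2.1]
  · exact h₁.eqOn_Ioo h₂ hx
end

section
/- Let d > 0 and let φ : [0,d] → ℝ be continuously differentiable on [0,d] and three times continuously differentiable on (0,d), with φ(0) = φ(d) = 0, φ'(0) = 1, φ(η) > 0 for all η ∈ (0,d), and φ'''(η) ≥ 0 for all η ∈ (0,d). Then there exists a unique m ∈ (0,d) such that φ'(m) = 0; moreover φ' > 0 on (0,m), φ' < 0 on (m,d) (so φ is strictly increasing on [0,m], strictly decreasing on [m,d] and attains its maximum exactly at m), and φ'(d) ≤ 0. -/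
open Set

/-- Lemma 1.2: if `φ ∈ C¹[0,d] ∩ C³(0,d)`, `φ(0) = φ(d) = 0`, `φ'(0) = 1`,
`φ > 0` and `φ''' ≥ 0` on `(0,d)`, then `φ'` has a unique zero `m` in `(0,d)`,
`φ' > 0` on `(0,m)`, `φ' < 0` on `(m,d)` (so `φ` is strictly increasing on `[0,m]`,
strictly decreasing on `[m,d]`, and attains its maximum exactly at `m`),
and `φ'(d) ≤ 0`. -/
theorem unique_maximum_of_convex_third_derivative (d : ℝ) (hd : 0 < d) (φ : ℝ → ℝ)
    (hC1 : ContDiffOn ℝ 1 φ (Set.Icc 0 d))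
    (hC3 : ContDiffOn ℝ 3 φ (Set.Ioo 0 d))
    (h0 : φ 0 = 0) (hd0 : φ d = 0)
    (hslope : derivWithin φ (Set.Icc 0 d) 0 = 1)
    (hpos : ∀ η ∈ Set.Ioo (0:ℝ) d, 0 < φ η)
    (h3 : ∀ η ∈ Set.Ioo (0:ℝ) d, 0 ≤ deriv (deriv (deriv φ)) η) :
    (∃ m ∈ Set.Ioo (0:ℝ) d,
      deriv φ m = 0 ∧
      (∀ η ∈ Set.Ioo (0:ℝ) m, 0 < deriv φ η) ∧
      (∀ η ∈ Set.Ioo m d, deriv φ η < 0) ∧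
      StrictMonoOn φ (Set.Icc 0 m) ∧
      StrictAntiOn φ (Set.Icc m d) ∧
      (∀ η ∈ Set.Icc (0:ℝ) d, η ≠ m → φ η < φ m) ∧
      (∀ m' ∈ Set.Ioo (0:ℝ) d, deriv φ m' = 0 → m' = m)) ∧
    derivWithin φ (Set.Icc 0 d) d ≤ 0 := by
  set f : ℝ → ℝ := derivWithin φ (Set.Icc 0 d) with hfdef
  have hIcc : UniqueDiffOn ℝ (Set.Icc (0:ℝ) d) := uniqueDiffOn_Icc hd
  have hfc : ContinuousOn f (Set.Icc 0 d) := hC1.continuousOn_derivWithin hIcc le_rfl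
  have hφc : ContinuousOn φ (Set.Icc 0 d) := hC1.continuousOn
  have hfd : ∀ x ∈ Set.Ioo (0:ℝ) d, f x = deriv φ x := fun x hx =>
    derivWithin_of_mem_nhds (Filter.mem_of_superset (isOpen_Ioo.mem_nhds hx)
      Set.Ioo_subset_Icc_self)
  -- If the derivative is positive on (a,b) ⊆ [0,d], φ a < φ b.
  have mono : ∀ a b : ℝ, (0:ℝ) ≤ a → a < b → b ≤ d →
      (∀ x ∈ Set.Ioo a b, 0 < deriv φ x) → φ a < φ b := by
    intro a b ha hab hbd hpos'
    have := strictMonoOn_of_deriv_pos (convex_Icc a b)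
      (hφc.mono (Set.Icc_subset_Icc ha hbd))
      (fun x hx => by rw [interior_Icc] at hx; exact hpos' x hx)
    exact this ⟨le_rfl, hab.le⟩ ⟨hab.le, le_rfl⟩ hab
  -- f is convex on [0,d]
  have hD1 : ContDiffOn ℝ 2 (deriv φ) (Set.Ioo 0 d) :=
    hC3.deriv_of_isOpen isOpen_Ioo (by norm_num)
  have hD2 : ContDiffOn ℝ 1 (deriv (deriv φ)) (Set.Ioo 0 d) :=
    hD1.deriv_of_isOpen isOpen_Ioo (by norm_num)
  have hEq : ∀ x ∈ Set.Ioo (0:ℝ) d, f =ᶠ[nhds x] deriv φ := fun x hx =>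
    Filter.eventuallyEq_of_mem (isOpen_Ioo.mem_nhds hx) hfd
  have hdf : ∀ x ∈ Set.Ioo (0:ℝ) d, deriv f x = deriv (deriv φ) x := fun x hx =>
    (hEq x hx).deriv_eq
  have hEq2 : ∀ x ∈ Set.Ioo (0:ℝ) d, deriv f =ᶠ[nhds x] deriv (deriv φ) := fun x hx =>
    Filter.eventuallyEq_of_mem (isOpen_Ioo.mem_nhds hx) hdf
  have hfconv : ConvexOn ℝ (Set.Icc 0 d) f := by
    apply convexOn_of_deriv2_nonneg (convex_Icc 0 d) hfc
    · rw [interior_Icc]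
      intro x hx
      have h1 : DifferentiableAt ℝ (deriv φ) x :=
        ((hD1.differentiableOn (by norm_num)) x hx).differentiableAt
          (isOpen_Ioo.mem_nhds hx)
      exact (h1.congr_of_eventuallyEq (hEq x hx)).differentiableWithinAt
    · rw [interior_Icc]
      intro x hx
      have h1 : DifferentiableAt ℝ (deriv (deriv φ)) x :=
        ((hD2.differentiableOn (by norm_num)) x hx).differentiableAt
          (isOpen_Ioo.mem_nhds hx)
      exact (h1.congr_of_eventuallyEq (hEq2 x hx)).differentiableWithinAt
    · rw [interior_Icc]
      intro x hx
      have : deriv^[2] f x = deriv (deriv f) x := by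
        simp [Function.iterate_succ, Function.iterate_one]
      rw [this, (hEq2 x hx).deriv_eq]
      exact h3 x hx
  -- f d ≤ 0
  have hf0 : f 0 = 1 := hslope
  have hfd0 : f d ≤ 0 := by
    by_contra hcon
    push_neg at hcon
    have htend : Filter.Tendsto f (nhdsWithin d (Set.Icc 0 d)) (nhds (f d)) :=
      hfc d ⟨hd.le, le_rfl⟩
    have hev : ∀ᶠ x in nhdsWithin d (Set.Icc 0 d), 0 < f x :=
      htend.eventually (eventually_gt_nhds hcon)
    obtain ⟨ε, hε, hball⟩ := Metric.mem_nhdsWithin_iff.mp hev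
    set a : ℝ := max (d - ε/2) (d/2) with ha
    have had : a < d := max_lt (by linarith) (by linarith)
    have ha2 : d/2 ≤ a := le_max_right _ _
    have ha0 : 0 < a := lt_of_lt_of_le (by linarith) ha2
    have key : ∀ x ∈ Set.Ioo a d, 0 < deriv φ x := by
      intro x hx
      have hx' : x ∈ Set.Ioo (0:ℝ) d := ⟨lt_trans ha0 hx.1, hx.2⟩
      rw [← hfd x hx']
      refine hball ⟨Metric.mem_ball.mpr ?_, hx'.1.le, hx'.2.le⟩
      rw [Real.dist_eq, abs_of_nonpos (by linarith [hx.2])]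
      have : d - ε/2 ≤ a := le_max_left _ _
      linarith [hx.1]
    have := mono a d ha0.le had le_rfl key
    rw [hd0] at this
    exact absurd (hpos a ⟨ha0, had⟩) (by linarith)
  -- the first zero of f
  set S : Set ℝ := {x ∈ Set.Icc (0:ℝ) d | f x ≤ 0} with hSdef
  have hdS : d ∈ S := ⟨⟨hd.le, le_rfl⟩, hfd0⟩
  have hSclosed : IsClosed S :=
    hfc.preimage_isClosed_of_isClosed isClosed_Icc isClosed_Iic
  have hSbdd : BddBelow S := ⟨0, fun x hx => hx.1.1⟩
  set m : ℝ := sInf S with hmdef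
  have hmS : m ∈ S := hSclosed.csInf_mem ⟨d, hdS⟩ hSbdd
  have hmIcc : m ∈ Set.Icc (0:ℝ) d := hmS.1
  have hfm_le : f m ≤ 0 := hmS.2
  have hlt : ∀ x ∈ Set.Icc (0:ℝ) d, x < m → 0 < f x := by
    intro x hx hxm
    by_contra hcon
    push_neg at hcon
    exact absurd (csInf_le hSbdd ⟨hx, hcon⟩) (not_le.mpr hxm)
  have hm_pos : 0 < m := by
    rcases hmIcc.1.lt_or_eq with h | h
    · exact h
    · exfalso; rw [← h, hf0] at hfm_le; linarith
  have hfm : f m = 0 := by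
    rcases hfm_le.lt_or_eq with h | h
    · exfalso
      have hsub : Set.Icc (0:ℝ) m ⊆ Set.Icc 0 d := Set.Icc_subset_Icc le_rfl hmIcc.2
      have := intermediate_value_Icc' hm_pos.le (hfc.mono hsub)
      have h0mem : (0:ℝ) ∈ Set.Icc (f m) (f 0) := ⟨h.le, by rw [hf0]; norm_num⟩
      obtain ⟨c, hc, hfc0⟩ := this h0mem
      have hcm : c < m := by
        rcases hc.2.lt_or_eq with h' | h'
        · exact h'
        · exfalso; rw [h'] at hfc0; rw [hfc0] at h; exact lt_irrefl 0 h
      exact absurd (hlt c ⟨hc.1, le_trans hc.2 hmIcc.2⟩ hcm) (by rw [hfc0]; exact lt_irrefl 0)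
    · exact h
  have hm_lt_d : m < d := by
    rcases hmIcc.2.lt_or_eq with h | h
    · exact h
    · exfalso
      have key : ∀ x ∈ Set.Ioo (0:ℝ) d, 0 < deriv φ x := by
        intro x hx
        rw [← hfd x hx]
        exact hlt x ⟨hx.1.le, hx.2.le⟩ (h ▸ hx.2)
      have := mono 0 d le_rfl hd le_rfl key
      rw [h0, hd0] at this; exact lt_irrefl 0 this
  have hmIoo : m ∈ Set.Ioo (0:ℝ) d := ⟨hm_pos, hm_lt_d⟩
  -- positivity of deriv φ on (0,m)
  have hIooPos : ∀ η ∈ Set.Ioo (0:ℝ) m, 0 < deriv φ η := by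
    intro η hη
    rw [← hfd η ⟨hη.1, lt_trans hη.2 hm_lt_d⟩]
    exact hlt η ⟨hη.1.le, le_trans hη.2.le hmIcc.2⟩ hη.2
  -- f ≤ 0 on [m,d]
  have hle : ∀ x ∈ Set.Icc m d, f x ≤ 0 := by
    intro x hx
    have hconvS : Convex ℝ {y ∈ Set.Icc (0:ℝ) d | f y ≤ 0} := hfconv.convex_le 0
    have hsub := hconvS.segment_subset (by exact hmS) (by exact hdS)
    rw [segment_eq_Icc hmIcc.2] at hsub
    exact (hsub hx).2
  -- strict negativity of deriv φ on (m,d)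
  have hIooNeg : ∀ η ∈ Set.Ioo m d, deriv φ η < 0 := by
    intro η hη
    have hη' : η ∈ Set.Ioo (0:ℝ) d := ⟨lt_trans hm_pos hη.1, hη.2⟩
    rw [← hfd η hη']
    rcases (hle η ⟨hη.1.le, hη.2.le⟩).lt_or_eq with h | h
    · exact h
    · exfalso
      -- f η = 0; then f = 0 on (η,d), so φ is monotone there, contradicting positivity
      have hzero : ∀ x ∈ Set.Ioo η d, deriv φ x = 0 := by
        intro x hx
        have hx' : x ∈ Set.Ioo (0:ℝ) d := ⟨lt_trans hη'.1 hx.1, hx.2⟩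
        have hslopes := hfconv.slope_mono_adjacent
          (x := m) (y := η) (z := x) hmIcc
          ⟨le_trans hmIcc.1 (le_trans hη.1.le hx.1.le), hx.2.le⟩ hη.1 hx.1
        rw [hfm, h] at hslopes
        simp only [sub_zero, zero_sub, zero_div] at hslopes
        have hx0 : 0 ≤ f x := by
          have hxη : 0 < x - η := by linarith [hx.1]
          rw [div_nonneg_iff] at hslopes
          rcases hslopes with ⟨h1, _⟩ | ⟨_, h2⟩
          · linarith
          · linarith
        have hx1 : f x ≤ 0 := hle x ⟨le_trans hη.1.le hx.1.le, hx.2.le⟩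
        rw [← hfd x hx']
        linarith
      have hmono : MonotoneOn φ (Set.Icc η d) := by
        apply monotoneOn_of_deriv_nonneg (convex_Icc η d)
          (hφc.mono (Set.Icc_subset_Icc hη'.1.le le_rfl))
        · rw [interior_Icc]
          exact (hC3.differentiableOn (by norm_num)).mono
            (fun x hx => ⟨lt_trans hη'.1 hx.1, hx.2⟩)
        · rw [interior_Icc]
          intro x hx
          rw [hzero x hx]
      have hy : (η + d)/2 ∈ Set.Ioo η d := ⟨by linarith [hη.2], by linarith [hη.2]⟩
      have := hmono ⟨le_rfl, hη.2.le⟩ (Set.Ioo_subset_Icc_self hy) hy.1.le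
      have hyd := hmono (Set.Ioo_subset_Icc_self hy) ⟨hη.2.le, le_rfl⟩ hy.2.le
      have hppos := hpos ((η + d)/2) ⟨lt_trans hη'.1 hy.1, hy.2⟩
      rw [hd0] at hyd
      linarith
  -- strict monotonicity / antitonicity
  have hSM : StrictMonoOn φ (Set.Icc 0 m) :=
    strictMonoOn_of_deriv_pos (convex_Icc 0 m)
      (hφc.mono (Set.Icc_subset_Icc le_rfl hm_lt_d.le))
      (fun x hx => by rw [interior_Icc] at hx; exact hIooPos x hx)
  have hSA : StrictAntiOn φ (Set.Icc m d) :=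
    strictAntiOn_of_deriv_neg (convex_Icc m d)
      (hφc.mono (Set.Icc_subset_Icc hm_pos.le le_rfl))
      (fun x hx => by rw [interior_Icc] at hx; exact hIooNeg x hx)
  refine ⟨⟨m, hmIoo, ?_, hIooPos, hIooNeg, hSM, hSA, ?_, ?_⟩, hfd0⟩
  · rw [← hfd m hmIoo]; exact hfm
  · intro η hη hne
    rcases lt_or_gt_of_ne hne with h | h
    · exact hSM ⟨hη.1, h.le⟩ ⟨hm_pos.le, le_rfl⟩ h
    · exact hSA ⟨le_rfl, hm_lt_d.le⟩ ⟨h.le, hη.2⟩ h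
  · intro m' hm' hm'0
    by_contra hne
    rcases lt_or_gt_of_ne hne with h | h
    · exact absurd (hIooPos m' ⟨hm'.1, h⟩) (by rw [hm'0]; exact lt_irrefl 0)
    · exact absurd (hIooNeg m' ⟨h, hm'.2⟩) (by rw [hm'0]; exact lt_irrefl 0)
end

section
/- For every integer k ≥ 1 there exists a function φ : [0,1/2] → ℝ that is three times continuously differentiable on [0,1/2], satisfies φ(η) > 0 for all η ∈ [0,1/2], φ'''(η) = 1/φ(η) for all η ∈ [0,1/2], φ(0) = φ(1/2) = 1/k, and φ'(0) = 1. -/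
/-!
Shooting in `s = φ''(0)`. With `0 < δ < c = 1/k`, replace `1/φ` by `1 / max φ δ`: the truncated
initial value problem `φ(0) = c`, `φ'(0) = 1`, `φ''(0) = s` is then globally Lipschitz, so it has
a solution `φ_s` on `[0, 1/2]` depending Lipschitz-continuously on `s` (Gronwall).

For `s ≤ 0` the quantity `φ φ'' - φ'^2/2 - η` is nonincreasing and starts negative, which rules out
an interior minimum of `φ_s` with nonnegative value. For `s = 0`, `φ_0 ≥ c` and `φ_0(1/2) > c`;
for `s ≪ 0`, `φ_s` drops below `δ`. At the largest `s₀ < 0` where `min φ_{s₀} = δ`, this minimum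
must sit at `η = 1/2`, so `φ_{s₀}(1/2) = δ < c`. The intermediate value theorem on `[s₀, 0]` gives
`φ_s(1/2) = c` with `min φ_s > δ`, so the truncation is inactive and `φ_s` solves `φ''' = 1/φ`.
-/

open Set Filter Topology
open scoped NNReal

theorem image_sub_le_mul_sub_of_hasDerivWithinAt_le {f f' : ℝ → ℝ} {S : Set ℝ}
    (hf : ∀ x ∈ S, HasDerivWithinAt f (f' x) S x) {a b C : ℝ} (hab : a ≤ b)
    (hS : Icc a b ⊆ S) (hC : ∀ x ∈ Ioo a b, f' x ≤ C) : f b - f a ≤ C * (b - a) := by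
  have hderiv : ∀ x ∈ interior (Icc a b), HasDerivAt f (f' x) x := fun x hx => by
    rw [interior_Icc] at hx
    exact (hf x (hS (Ioo_subset_Icc_self hx))).hasDerivAt
      (mem_of_superset (Icc_mem_nhds hx.1 hx.2) hS)
  refine (convex_Icc a b).image_sub_le_mul_sub_of_deriv_le
    (fun x hx => (hf x (hS hx)).continuousWithinAt.mono hS)
    (fun x hx => (hderiv x hx).differentiableAt.differentiableWithinAt)
    (fun x hx => (hderiv x hx).deriv ▸ hC x (by rwa [interior_Icc] at hx))
    a (left_mem_Icc.2 hab) b (right_mem_Icc.2 hab) hab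

theorem mul_sub_le_image_sub_of_le_hasDerivWithinAt {f f' : ℝ → ℝ} {S : Set ℝ}
    (hf : ∀ x ∈ S, HasDerivWithinAt f (f' x) S x) {a b C : ℝ} (hab : a ≤ b)
    (hS : Icc a b ⊆ S) (hC : ∀ x ∈ Ioo a b, C ≤ f' x) : C * (b - a) ≤ f b - f a := by
  have := image_sub_le_mul_sub_of_hasDerivWithinAt_le (fun x hx => (hf x hx).neg) hab hS
    (C := -C) fun x hx => neg_le_neg (hC x hx)
  simp only [Pi.neg_apply] at this
  linarith

theorem IsLocalMin.nonneg_of_hasDerivAt_deriv {f f' : ℝ → ℝ} {x f'' : ℝ} (h : IsLocalMin f x)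
    (hf : ∀ᶠ y in 𝓝 x, HasDerivAt f (f' y) y) (hf' : HasDerivAt f' f'' x) : 0 ≤ f'' := by
  have hderiv : deriv f =ᶠ[𝓝 x] f' := hf.mono fun y hy => hy.deriv
  have hsecond : deriv (deriv f) x = f'' := hderiv.deriv_eq.trans hf'.deriv
  by_contra! hneg
  have hmax : IsLocalMax f x := isLocalMax_of_deriv_deriv_neg (hsecond ▸ hneg)
    h.deriv_eq_zero hf.self_of_nhds.continuousAt
  have hconst : f =ᶠ[𝓝 x] fun _ => f x := (h.and hmax).mono fun y hy => le_antisymm hy.2 hy.1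
  have hzero : deriv f =ᶠ[𝓝 x] fun _ => 0 :=
    hconst.eventuallyEq_nhds.mono fun y hy => by rw [hy.deriv_eq, deriv_const]
  rw [hzero.deriv_eq, deriv_const] at hsecond
  exact hneg.ne hsecond.symm

theorem lipschitzWith_sInf_image {α β : Type*} [TopologicalSpace α] [PseudoMetricSpace β]
    {K : Set α} (hK : IsCompact K) (hne : K.Nonempty) {f : β → α → ℝ}
    (hf : ∀ s, ContinuousOn (f s) K) {L : ℝ≥0} (hL : ∀ t ∈ K, LipschitzWith L (f · t)) :
    LipschitzWith L fun s => sInf (f s '' K) := by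
  refine LipschitzWith.of_le_add_mul L fun s s' => ?_
  obtain ⟨t, htK, ht, -⟩ := hK.exists_sInf_image_eq_and_le hne (hf s')
  calc sInf (f s '' K) ≤ f s t :=
        csInf_le (hK.image_of_continuousOn (hf s)).bddBelow (mem_image_of_mem _ htK)
    _ ≤ f s' t + L * dist s s' := (hL t htK).le_add_mul s s'
    _ = sInf (f s' '' K) + L * dist s s' := by rw [ht]

theorem ContinuousOn.exists_eq_and_forall_Ioc_lt {f : ℝ → ℝ} {a b y : ℝ} (hab : a ≤ b)
    (hf : ContinuousOn f (Icc a b)) (ha : f a ≤ y) (hb : y < f b) :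
    ∃ c ∈ Ico a b, f c = y ∧ ∀ x ∈ Ioc c b, y < f x := by
  set S := Icc a b ∩ f ⁻¹' Iic y
  have hbdd : BddAbove S := ⟨b, fun x hx => hx.1.2⟩
  have hcS : sSup S ∈ S := (hf.preimage_isClosed_of_isClosed isClosed_Icc isClosed_Iic).csSup_mem
    ⟨a, left_mem_Icc.2 hab, ha⟩ hbdd
  have habove : ∀ x ∈ Ioc (sSup S) b, y < f x := fun x hx => by
    by_contra! hxy
    exact (le_csSup hbdd ⟨⟨hcS.1.1.trans hx.1.le, hx.2⟩, hxy⟩).not_gt hx.1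
  refine ⟨sSup S, ⟨hcS.1.1, hcS.1.2.lt_of_ne ?_⟩, le_antisymm hcS.2 ?_, habove⟩
  · rintro hcb
    exact (hcb ▸ hcS.2).not_gt hb
  · by_contra! hlt
    obtain ⟨x, hx, hfx⟩ := intermediate_value_Icc hcS.1.2
      (hf.mono (Icc_subset_Icc_left hcS.1.1)) ⟨hlt.le, hb.le⟩
    rcases hx.1.eq_or_lt with rfl | hx'
    · exact hlt.ne hfx
    · exact (habove x ⟨hx', hx.2⟩).ne hfx.symm

theorem exists_hasDerivWithinAt_of_lipschitzWith {E : Type*} [NormedAddCommGroup E]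
    [NormedSpace ℝ E] [CompleteSpace E] {F : E → E} {K B : ℝ≥0} (hF : LipschitzWith K F)
    (hB : ∀ x, ‖F x‖ ≤ ‖x‖ + B) (x₀ : E) :
    ∃ α : ℝ → E, α 0 = x₀ ∧
      ∀ t ∈ Icc (0 : ℝ) (1 / 2), HasDerivWithinAt α (F (α t)) (Icc 0 (1 / 2)) t := by
  set a : ℝ≥0 := ‖x₀‖₊ + B
  have hbound : ∀ x ∈ Metric.closedBall x₀ a, ‖F x‖ ≤ (2 * a : ℝ≥0) := fun x hx => by
    have hx' := norm_le_norm_add_const_of_dist_le hx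
    have := hB x
    simp only [a, NNReal.coe_mul, NNReal.coe_add, coe_nnnorm] at hx' ⊢
    push_cast
    linarith
  have hpl : IsPicardLindelof (fun _ => F) (tmin := 0) (tmax := 1 / 2) ⟨0, by norm_num⟩ x₀ a 0
      (2 * a) K :=
    IsPicardLindelof.of_time_independent hbound hF.lipschitzOnWith (by norm_num; linarith)
  exact hpl.exists_eq_forall_mem_Icc_hasDerivWithinAt₀

theorem contDiffOn_succ_of_hasDerivWithinAt {s : Set ℝ} (hs : UniqueDiffOn ℝ s) {f f' : ℝ → ℝ}
    {n : ℕ} (hf : ∀ x ∈ s, HasDerivWithinAt f (f' x) s x) (hf' : ContDiffOn ℝ n f' s) :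
    ContDiffOn ℝ (n + 1) f s := by
  rw [contDiffOn_succ_iff_derivWithin hs]
  exact ⟨fun x hx => (hf x hx).differentiableWithinAt, by simp,
    hf'.congr fun x hx => (hf x hx).derivWithin (hs x hx)⟩

theorem iteratedDerivWithin_succ_eq_of_hasDerivWithinAt {s : Set ℝ} (hs : UniqueDiffOn ℝ s)
    {f f' : ℝ → ℝ} (hf : ∀ x ∈ s, HasDerivWithinAt f (f' x) s x) (n : ℕ) {x : ℝ} (hx : x ∈ s) :
    iteratedDerivWithin (n + 1) f s x = iteratedDerivWithin n f' s x := by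
  rw [iteratedDerivWithin_succ']
  exact iteratedDerivWithin_congr (fun y hy => (hf y hy).derivWithin (hs y hy)) hx

local notation "𝕀" => Icc (0 : ℝ) (1 / 2)

namespace ApproximatingProblem

noncomputable def truncInv (δ y : ℝ) : ℝ := (max y δ)⁻¹

variable {δ : ℝ}

theorem truncInv_pos (hδ : 0 < δ) (y : ℝ) : 0 < truncInv δ y :=
  inv_pos.2 (hδ.trans_le (le_max_right _ _))

theorem truncInv_le (hδ : 0 < δ) (y : ℝ) : truncInv δ y ≤ δ⁻¹ :=
  inv_anti₀ hδ (le_max_right _ _)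

theorem truncInv_of_le {y : ℝ} (h : δ ≤ y) : truncInv δ y = y⁻¹ := by
  rw [truncInv, max_eq_left h]

theorem mul_truncInv_le_one (hδ : 0 < δ) (y : ℝ) : y * truncInv δ y ≤ 1 := by
  have hmax : 0 < max y δ := hδ.trans_le (le_max_right _ _)
  calc y * (max y δ)⁻¹ ≤ max y δ * (max y δ)⁻¹ := by gcongr; exact le_max_left _ _
    _ = 1 := mul_inv_cancel₀ hmax.ne'

theorem lipschitzWith_truncInv (hδ : 0 < δ) :
    LipschitzWith (Real.toNNReal (δ⁻¹ ^ 2)) (truncInv δ) := by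
  refine LipschitzWith.of_dist_le_mul fun y z => ?_
  have hy : δ ≤ max y δ := le_max_right _ _
  have hz : δ ≤ max z δ := le_max_right _ _
  rw [truncInv, truncInv, dist_inv_inv₀ (hδ.trans_le hy).ne' (hδ.trans_le hz).ne',
    Real.coe_toNNReal _ (by positivity), Real.norm_of_nonneg (hδ.le.trans hy),
    Real.norm_of_nonneg (hδ.le.trans hz), div_eq_inv_mul, mul_inv, sq]
  have hdist : dist (max y δ) (max z δ) ≤ dist y z := by
    simpa using (LipschitzWith.id.max_const δ).dist_le_mul y z
  gcongr

/-- The truncated equation `φ''' = 1 / max φ δ` as a first-order system for `(φ, φ', φ'')`. -/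
noncomputable def truncField (δ : ℝ) (z : ℝ × ℝ × ℝ) : ℝ × ℝ × ℝ :=
  (z.2.1, z.2.2, truncInv δ z.1)

theorem lipschitzWith_truncField (hδ : 0 < δ) : ∃ K, LipschitzWith K (truncField δ) :=
  ⟨_, (LipschitzWith.prod_fst.comp LipschitzWith.prod_snd).prodMk
    ((LipschitzWith.prod_snd.comp LipschitzWith.prod_snd).prodMk
      ((lipschitzWith_truncInv hδ).comp LipschitzWith.prod_fst))⟩

theorem norm_truncField_le (hδ : 0 < δ) (z : ℝ × ℝ × ℝ) :
    ‖truncField δ z‖ ≤ ‖z‖ + Real.toNNReal δ⁻¹ := by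
  have h₁ : ‖z.2.1‖ ≤ ‖z‖ := (norm_fst_le z.2).trans (norm_snd_le z)
  have h₂ : ‖z.2.2‖ ≤ ‖z‖ := (norm_snd_le z.2).trans (norm_snd_le z)
  have h₃ : ‖truncInv δ z.1‖ ≤ Real.toNNReal δ⁻¹ := by
    rw [Real.norm_of_nonneg (truncInv_pos hδ _).le]
    exact (truncInv_le hδ _).trans (Real.le_coe_toNNReal _)
  have hδ' : (0 : ℝ) ≤ Real.toNNReal δ⁻¹ := NNReal.coe_nonneg _
  rw [truncField, Prod.norm_mk, Prod.norm_mk]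
  exact max_le (by linarith) (max_le (by linarith) (by linarith [norm_nonneg z]))

/-- `u = (φ, φ', φ'')` solves the truncated problem on `[0, 1/2]` with `φ(0) = c`, `φ'(0) = 1`,
`φ''(0) = s`. -/
structure IsShot (δ c s : ℝ) (u : ℝ → ℝ × ℝ × ℝ) : Prop where
  apply_zero : u 0 = (c, 1, s)
  hasDerivWithinAt : ∀ t ∈ 𝕀, HasDerivWithinAt u (truncField δ (u t)) 𝕀 t

theorem exists_isShot (hδ : 0 < δ) (c s : ℝ) : ∃ u, IsShot δ c s u := by
  obtain ⟨K, hK⟩ := lipschitzWith_truncField hδ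
  obtain ⟨u, hu₀, hu⟩ :=
    exists_hasDerivWithinAt_of_lipschitzWith hK (norm_truncField_le hδ) (c, 1, s)
  exact ⟨u, hu₀, hu⟩

namespace IsShot

variable {c s : ℝ} {u : ℝ → ℝ × ℝ × ℝ}

theorem hasDerivWithinAt_fst (hu : IsShot δ c s u) :
    ∀ t ∈ 𝕀, HasDerivWithinAt (fun t => (u t).1) (u t).2.1 𝕀 t :=
  fun t ht => (hu.hasDerivWithinAt t ht).fst

theorem hasDerivWithinAt_snd_fst (hu : IsShot δ c s u) :
    ∀ t ∈ 𝕀, HasDerivWithinAt (fun t => (u t).2.1) (u t).2.2 𝕀 t :=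
  fun t ht => (hu.hasDerivWithinAt t ht).snd.fst

theorem hasDerivWithinAt_snd_snd (hu : IsShot δ c s u) :
    ∀ t ∈ 𝕀, HasDerivWithinAt (fun t => (u t).2.2) (truncInv δ (u t).1) 𝕀 t :=
  fun t ht => (hu.hasDerivWithinAt t ht).snd.snd

theorem continuousOn_fst (hu : IsShot δ c s u) : ContinuousOn (fun t => (u t).1) 𝕀 :=
  fun t ht => (hu.hasDerivWithinAt_fst t ht).continuousWithinAt

theorem dist_le {K : ℝ≥0} (hK : LipschitzWith K (truncField δ)) (hu : IsShot δ c s u)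
    {s' : ℝ} {v : ℝ → ℝ × ℝ × ℝ} (hv : IsShot δ c s' v) {t : ℝ} (ht : t ∈ 𝕀) :
    dist (u t) (v t) ≤ dist s s' * Real.exp (K * t) := by
  have hright : ∀ {w : ℝ → ℝ × ℝ × ℝ} {s''}, IsShot δ c s'' w → ∀ t ∈ Ico (0 : ℝ) (1 / 2),
      HasDerivWithinAt w (truncField δ (w t)) (Ici t) t := fun hw t ht =>
    (hw.hasDerivWithinAt t (Ico_subset_Icc_self ht)).mono_of_mem_nhdsWithin
      (Icc_mem_nhdsGE_of_mem ht)
  have h₀ : dist (u 0) (v 0) ≤ dist s s' := by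
    simp [hu.apply_zero, hv.apply_zero, Prod.dist_eq]
  simpa using dist_le_of_trajectories_ODE (fun _ => hK)
    (fun t ht => (hu.hasDerivWithinAt t ht).continuousWithinAt) (hright hu)
    (fun t ht => (hv.hasDerivWithinAt t ht).continuousWithinAt) (hright hv) h₀ t ht

/-- `J = φ φ'' - φ'^2 / 2` has `J' = φ / max φ δ ≤ 1`, so `J(τ) ≤ c s - 1/2 + τ < 0` for
`τ < 1/2`; at an interior minimum `φ' = 0` and `φ'' ≥ 0`, so `J(τ) = φ φ''` forces `φ(τ) < 0`. -/
theorem fst_neg_of_isLocalMin (hu : IsShot δ c s u) (hδ : 0 < δ) (hc : 0 < c) (hs : s ≤ 0)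
    {τ : ℝ} (hτ : τ ∈ Ioo (0 : ℝ) (1 / 2)) (hmin : IsLocalMin (fun t => (u t).1) τ) :
    (u τ).1 < 0 := by
  have hnhds : 𝕀 ∈ 𝓝 τ := Icc_mem_nhds hτ.1 hτ.2
  have hp : (u τ).2.1 = 0 :=
    hmin.hasDerivAt_eq_zero ((hu.hasDerivWithinAt_fst τ (mem_of_mem_nhds hnhds)).hasDerivAt hnhds)
  have hq : 0 ≤ (u τ).2.2 := hmin.nonneg_of_hasDerivAt_deriv
    (eventually_of_mem (Ioo_mem_nhds hτ.1 hτ.2) fun t ht =>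
      (hu.hasDerivWithinAt_fst t (Ioo_subset_Icc_self ht)).hasDerivAt
        (Icc_mem_nhds ht.1 ht.2))
    ((hu.hasDerivWithinAt_snd_fst τ (mem_of_mem_nhds hnhds)).hasDerivAt hnhds)
  have hJ : ∀ t ∈ 𝕀, HasDerivWithinAt (fun t => (u t).1 * (u t).2.2 - (u t).2.1 ^ 2 / 2)
      ((u t).1 * truncInv δ (u t).1) 𝕀 t := fun t ht =>
    (((hu.hasDerivWithinAt_fst t ht).mul (hu.hasDerivWithinAt_snd_snd t ht)).sub
      (((hu.hasDerivWithinAt_snd_fst t ht).pow 2).div_const 2)).congr_deriv (by ring)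
  have hJτ := image_sub_le_mul_sub_of_hasDerivWithinAt_le hJ hτ.1.le
    (Icc_subset_Icc le_rfl hτ.2.le) fun t _ => mul_truncInv_le_one hδ _
  simp only [hu.apply_zero, hp] at hJτ
  by_contra! hτ_nonneg
  nlinarith [mul_nonneg hτ_nonneg hq, mul_nonpos_of_nonneg_of_nonpos hc.le hs, hτ.2]

theorem eq_half_of_isMinOn (hu : IsShot δ c s u) (hδ : 0 < δ) (hc : 0 < c) (hs : s ≤ 0)
    {τ : ℝ} (hτ : τ ∈ 𝕀) (hmin : IsMinOn (fun t => (u t).1) 𝕀 τ) (hpos : 0 ≤ (u τ).1)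
    (hne : (u τ).1 ≠ c) : τ = 1 / 2 := by
  rcases hτ.1.eq_or_lt with rfl | h₀
  · simp [hu.apply_zero] at hne
  refine hτ.2.eq_or_lt.resolve_right fun h₁ => ?_
  exact (hu.fst_neg_of_isLocalMin hδ hc hs ⟨h₀, h₁⟩
    (hmin.isLocalMin (Icc_mem_nhds h₀ h₁))).not_ge hpos

theorem add_le_fst (hu : IsShot δ c 0 u) (hδ : 0 < δ) {t : ℝ} (ht : t ∈ 𝕀) :
    c + t ≤ (u t).1 := by
  have hsub : Icc 0 t ⊆ 𝕀 := Icc_subset_Icc le_rfl ht.2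
  have hq : ∀ t ∈ 𝕀, 0 ≤ (u t).2.2 := fun t ht => by
    have := mul_sub_le_image_sub_of_le_hasDerivWithinAt hu.hasDerivWithinAt_snd_snd ht.1
      (Icc_subset_Icc le_rfl ht.2) fun x _ => (truncInv_pos hδ _).le
    simpa [hu.apply_zero] using this
  have hp : ∀ t ∈ 𝕀, 1 ≤ (u t).2.1 := fun t ht => by
    have := mul_sub_le_image_sub_of_le_hasDerivWithinAt hu.hasDerivWithinAt_snd_fst ht.1
      (Icc_subset_Icc le_rfl ht.2) fun x hx => hq x ⟨hx.1.le, hx.2.le.trans ht.2⟩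
    simpa [hu.apply_zero] using this
  have := mul_sub_le_image_sub_of_le_hasDerivWithinAt hu.hasDerivWithinAt_fst ht.1 hsub
    fun x hx => hp x (hsub (Ioo_subset_Icc_self hx))
  simp [hu.apply_zero] at this
  linarith

theorem fst_half_le (hu : IsShot δ c s u) (hδ : 0 < δ) {m : ℝ} (hm : 0 ≤ m)
    (hs : s + δ⁻¹ / 2 ≤ -m) : (u (1 / 2)).1 ≤ c + 1 / 2 - m / 16 := by
  have hq : ∀ t ∈ 𝕀, (u t).2.2 ≤ -m := fun t ht => by
    have := image_sub_le_mul_sub_of_hasDerivWithinAt_le hu.hasDerivWithinAt_snd_snd ht.1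
      (Icc_subset_Icc le_rfl ht.2) fun x _ => truncInv_le hδ _
    simp only [hu.apply_zero, sub_zero] at this
    nlinarith [ht.2, inv_pos.2 hδ]
  have hp : ∀ t ∈ 𝕀, (u t).2.1 ≤ 1 - m * t := fun t ht => by
    have := image_sub_le_mul_sub_of_hasDerivWithinAt_le hu.hasDerivWithinAt_snd_fst ht.1
      (Icc_subset_Icc le_rfl ht.2) fun x hx => hq x ⟨hx.1.le, hx.2.le.trans ht.2⟩
    simp only [hu.apply_zero, sub_zero] at this
    linarith
  have ha₁ := image_sub_le_mul_sub_of_hasDerivWithinAt_le hu.hasDerivWithinAt_fst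
    (a := 0) (b := 1 / 4) (C := 1) (by norm_num) (Icc_subset_Icc le_rfl (by norm_num))
    fun x hx => (hp x ⟨hx.1.le, by linarith [hx.2]⟩).trans (by nlinarith [hx.1])
  have ha₂ := image_sub_le_mul_sub_of_hasDerivWithinAt_le hu.hasDerivWithinAt_fst
    (a := 1 / 4) (b := 1 / 2) (C := 1 - m / 4) (by norm_num) (Icc_subset_Icc (by norm_num) le_rfl)
    fun x hx => (hp x ⟨by linarith [hx.1], hx.2.le⟩).trans (by nlinarith [hx.1])
  simp only [hu.apply_zero] at ha₁
  linarith

theorem derivWithin_fst_zero (hu : IsShot δ c s u) : derivWithin (fun t => (u t).1) 𝕀 0 = 1 := by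
  have h₀ : (0 : ℝ) ∈ 𝕀 := left_mem_Icc.2 (by norm_num)
  rw [(hu.hasDerivWithinAt_fst 0 h₀).derivWithin (uniqueDiffOn_Icc (by norm_num) 0 h₀),
    hu.apply_zero]

theorem contDiffOn_fst_and_iteratedDerivWithin (hu : IsShot δ c s u) (hδ : 0 < δ)
    (hgt : ∀ t ∈ 𝕀, δ < (u t).1) :
    ContDiffOn ℝ 3 (fun t => (u t).1) 𝕀 ∧
      ∀ t ∈ 𝕀, iteratedDerivWithin 3 (fun t => (u t).1) 𝕀 t = 1 / (u t).1 := by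
  have hI : UniqueDiffOn ℝ 𝕀 := uniqueDiffOn_Icc (by norm_num)
  have hq : ∀ t ∈ 𝕀, HasDerivWithinAt (fun t => (u t).2.2) (1 / (u t).1) 𝕀 t := fun t ht => by
    rw [one_div, ← truncInv_of_le (hgt t ht).le]
    exact hu.hasDerivWithinAt_snd_snd t ht
  have hcont : ContinuousOn (fun t => 1 / (u t).1) 𝕀 :=
    continuousOn_const.div hu.continuousOn_fst fun t ht => (hδ.trans (hgt t ht)).ne'
  refine ⟨?_, fun t ht => ?_⟩
  · exact contDiffOn_succ_of_hasDerivWithinAt hI hu.hasDerivWithinAt_fst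
      (contDiffOn_succ_of_hasDerivWithinAt hI hu.hasDerivWithinAt_snd_fst
        (contDiffOn_succ_of_hasDerivWithinAt (n := 0) hI hq (contDiffOn_zero.2 hcont)))
  · rw [iteratedDerivWithin_succ_eq_of_hasDerivWithinAt hI hu.hasDerivWithinAt_fst 2 ht,
      iteratedDerivWithin_succ_eq_of_hasDerivWithinAt hI hu.hasDerivWithinAt_snd_fst 1 ht,
      iteratedDerivWithin_succ_eq_of_hasDerivWithinAt hI hq 0 ht, iteratedDerivWithin_zero]

end IsShot

theorem exists_lipschitzWith_fst_of_isShot (hδ : 0 < δ) {c : ℝ} {sol : ℝ → ℝ → ℝ × ℝ × ℝ}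
    (hsol : ∀ s, IsShot δ c s (sol s)) : ∃ L, ∀ t ∈ 𝕀, LipschitzWith L fun s => (sol s t).1 := by
  obtain ⟨K, hK⟩ := lipschitzWith_truncField hδ
  refine ⟨Real.toNNReal (Real.exp (K / 2)), fun t ht => LipschitzWith.of_dist_le_mul fun s s' => ?_⟩
  rw [Real.coe_toNNReal _ (Real.exp_pos _).le]
  calc dist (sol s t).1 (sol s' t).1 ≤ dist (sol s t) (sol s' t) := le_max_left _ _
    _ ≤ dist s s' * Real.exp (K * t) := (hsol s).dist_le hK (hsol s') ht
    _ ≤ Real.exp (K / 2) * dist s s' := by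
      rw [mul_comm]; gcongr; nlinarith [ht.2, K.2]

theorem exists_isShot_forall_gt_and_fst_half_eq (hδ : 0 < δ) {c : ℝ} (hδc : δ < c) :
    ∃ s u, IsShot δ c s u ∧ (∀ t ∈ 𝕀, δ < (u t).1) ∧ (u (1 / 2)).1 = c := by
  have hc : 0 < c := hδ.trans hδc
  have hne : (𝕀).Nonempty := nonempty_Icc.2 (by norm_num)
  have hhalf : (1 / 2 : ℝ) ∈ 𝕀 := right_mem_Icc.2 (by norm_num)
  choose sol hsol using exists_isShot hδ c
  obtain ⟨L, hLip⟩ := exists_lipschitzWith_fst_of_isShot hδ hsol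
  set M : ℝ → ℝ := fun s => sInf ((fun t => (sol s t).1) '' 𝕀)
  have hM_le : ∀ s, ∀ t ∈ 𝕀, M s ≤ (sol s t).1 := fun s t ht =>
    csInf_le (isCompact_Icc.image_of_continuousOn (hsol s).continuousOn_fst).bddBelow
      (mem_image_of_mem _ ht)
  set s₁ : ℝ := -16 * (c + 1) - δ⁻¹ / 2
  have hM₁ : M s₁ ≤ δ := (hM_le s₁ _ hhalf).trans (by
    linarith [(hsol s₁).fst_half_le hδ (m := 16 * (c + 1)) (by positivity) (by simp [s₁])])
  have hM₀ : δ < M 0 := hδc.trans_le (le_csInf (hne.image _) (forall_mem_image.2 fun t ht => by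
    linarith [(hsol 0).add_le_fst hδ ht, ht.1]))
  obtain ⟨s₀, hs₀, hMs₀, hM_gt⟩ :=
    (lipschitzWith_sInf_image isCompact_Icc hne (fun s => (hsol s).continuousOn_fst)
      hLip).continuous.continuousOn.exists_eq_and_forall_Ioc_lt
      (by simp only [s₁]; linarith [inv_pos.2 hδ]) hM₁ hM₀
  have hσ₀ : (sol s₀ (1 / 2)).1 = δ := by
    obtain ⟨τ, hτ, hMτ, hτmin⟩ :=
      isCompact_Icc.exists_sInf_image_eq_and_le hne (hsol s₀).continuousOn_fst
    have hτδ : (sol s₀ τ).1 = δ := hMτ.symm.trans hMs₀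
    rwa [(hsol s₀).eq_half_of_isMinOn hδ hc hs₀.2.le hτ (isMinOn_iff.2 hτmin)
      (hτδ ▸ hδ.le) (hτδ ▸ hδc.ne)] at hτδ
  obtain ⟨s, hs, hσs⟩ := intermediate_value_Icc hs₀.2.le (hLip _ hhalf).continuous.continuousOn
    ⟨hσ₀.trans_le hδc.le, by linarith [(hsol 0).add_le_fst hδ hhalf]⟩
  have hs₀s : s₀ < s := hs.1.lt_of_ne <| by
    rintro rfl; exact hδc.ne (hσ₀.symm.trans hσs)
  exact ⟨s, sol s, hsol s, fun t ht => (hM_gt s ⟨hs₀s, hs.2⟩).trans_le (hM_le s t ht), hσs⟩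

end ApproximatingProblem

/-- Solvability of the approximating problems (1.4): for each integer `k ≥ 1` there is a
positive `C³[0,1/2]` function `φ` with `φ''' = 1/φ` on `[0,1/2]`, `φ(0) = φ(1/2) = 1/k`
and `φ'(0) = 1` (derivatives taken within `[0,1/2]`). -/
theorem approximating_problem_solvable (k : ℕ) (hk : 1 ≤ k) :
    ∃ φ : ℝ → ℝ,
      ContDiffOn ℝ 3 φ (Set.Icc 0 (1/2)) ∧
      (∀ η ∈ Set.Icc (0:ℝ) (1/2), 0 < φ η) ∧
      (∀ η ∈ Set.Icc (0:ℝ) (1/2),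
        iteratedDerivWithin 3 φ (Set.Icc 0 (1/2)) η = 1 / φ η) ∧
      φ 0 = 1 / k ∧ φ (1/2) = 1 / k ∧
      derivWithin φ (Set.Icc 0 (1/2)) 0 = 1 := by
  have hc : (0 : ℝ) < 1 / k := one_div_pos.2 (Nat.cast_pos.2 hk)
  obtain ⟨s, u, hu, hgt, hhalf⟩ :=
    ApproximatingProblem.exists_isShot_forall_gt_and_fst_half_eq (half_pos hc) (half_lt_self hc)
  obtain ⟨hC3, hthird⟩ := hu.contDiffOn_fst_and_iteratedDerivWithin (half_pos hc) hgt
  exact ⟨fun t => (u t).1, hC3, fun t ht => (half_pos hc).trans (hgt t ht), hthird,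
    by simp [hu.apply_zero], hhalf, hu.derivWithin_fst_zero⟩
end

section
/- There exists a constant M > 0 such that for every integer k ≥ 1 and every function φ : [0,1/2] → ℝ that is three times continuously differentiable on [0,1/2], positive on [0,1/2], and satisfies φ'''(η) = 1/φ(η) on [0,1/2], φ(0) = φ(1/2) = 1/k, φ'(0) = 1, one has |φ(η)| ≤ M and |φ'(η)| ≤ M for all η ∈ [0,1/2]. -/
/-!
With `ε = 1/k`, the quantity `φ φ'' - φ'²/2 - x` is a first integral (its derivative is
`φ φ''' - 1 = 0`), equal to `ε φ''(0) - 1/2`. Since `φ''' > 0` and `φ(0) = φ(1/2)` while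
`φ'(0) = 1`, we get `φ''(0) < 0`. At an interior critical point of `φ` the first integral then
forces `φ'' < 0`, so `φ` has no interior local minimum and `φ ≥ ε`. Hence `φ''' ≤ 1/ε` and
`ε (φ''(1/2) - φ''(0)) ≤ 1/2`, and the first integral bounds `φ'²` by `1` at `x = 1/2` and by `2`
at interior critical points of `φ'`. So `|φ'| ≤ 2`, and then `φ ≤ ε + 1 ≤ 2`.
-/

open Set Filter Topology

theorem IsLocalMin.nonneg_of_hasDerivAt_of_hasDerivAt {f f' : ℝ → ℝ} {x c : ℝ}
    (hmin : IsLocalMin f x) (hf : ∀ᶠ y in 𝓝 x, HasDerivAt f (f' y) y)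
    (hf' : HasDerivAt f' c x) : 0 ≤ c := by
  have hderiv : deriv f =ᶠ[𝓝 x] f' := hf.mono fun y hy => hy.deriv
  have hc : deriv (deriv f) x = c := hderiv.deriv_eq ▸ hf'.deriv
  by_contra! hneg
  -- by the second-derivative test `x` is also a local maximum, so `f` is locally constant
  have hmax : IsLocalMax f x :=
    isLocalMax_of_deriv_deriv_neg (hc ▸ hneg) (hderiv.eq_of_nhds.trans (hmin.hasDerivAt_eq_zero
      hf.self_of_nhds)) (hf.self_of_nhds.continuousAt)
  have hconst : f =ᶠ[𝓝 x] fun _ => f x := by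
    filter_upwards [hmin, hmax] with y hy₁ hy₂ using le_antisymm hy₂ hy₁
  have : deriv (deriv f) x = 0 := by
    rw [(hconst.deriv).deriv_eq]
    simp
  linarith

theorem ContinuousOn.le_of_forall_isLocalMin {f : ℝ → ℝ} {a b C : ℝ}
    (hf : ContinuousOn f (Icc a b)) (ha : C ≤ f a) (hb : C ≤ f b)
    (hloc : ∀ x ∈ Ioo a b, IsLocalMin f x → C ≤ f x) : ∀ x ∈ Icc a b, C ≤ f x := by
  intro x hx
  obtain ⟨m, hm, hmin⟩ := isCompact_Icc.exists_isMinOn ⟨x, hx⟩ hf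
  refine le_trans ?_ (hmin hx)
  rcases eq_or_lt_of_le hm.1 with rfl | ham
  · exact ha
  rcases eq_or_lt_of_le hm.2 with rfl | hmb
  · exact hb
  exact hloc m ⟨ham, hmb⟩ (hmin.isLocalMin (Icc_mem_nhds ham hmb))

theorem ContinuousOn.abs_le_of_forall_deriv_eq_zero {f : ℝ → ℝ} {a b C : ℝ}
    (hf : ContinuousOn f (Icc a b)) (ha : |f a| ≤ C) (hb : |f b| ≤ C)
    (hcrit : ∀ x ∈ Ioo a b, deriv f x = 0 → |f x| ≤ C) : ∀ x ∈ Icc a b, |f x| ≤ C := by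
  intro x hx
  refine abs_le.2 ⟨?_, ?_⟩
  · refine hf.le_of_forall_isLocalMin (neg_le_of_abs_le ha) (neg_le_of_abs_le hb)
      (fun y hy hmin => neg_le_of_abs_le (hcrit y hy hmin.deriv_eq_zero)) x hx
  · have hneg : -C ≤ -f x := hf.neg.le_of_forall_isLocalMin (neg_le_neg (le_of_abs_le ha))
      (neg_le_neg (le_of_abs_le hb)) (fun y hy hmin => by
        have hd : deriv f y = 0 := by simpa [deriv.neg'] using hmin.deriv_eq_zero
        exact neg_le_neg (le_of_abs_le (hcrit y hy hd))) x hx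
    linarith

theorem first_integral_eq {s : Set ℝ} (hs : Convex ℝ s) {φ φ' φ'' : ℝ → ℝ}
    (hφ : ∀ x ∈ s, HasDerivWithinAt φ (φ' x) s x)
    (hφ' : ∀ x ∈ s, HasDerivWithinAt φ' (φ'' x) s x)
    (hφ'' : ∀ x ∈ s, HasDerivWithinAt φ'' (1 / φ x) s x) (hne : ∀ x ∈ s, φ x ≠ 0)
    {x y : ℝ} (hx : x ∈ s) (hy : y ∈ s) :
    φ y * φ'' y - φ' y ^ 2 / 2 - y = φ x * φ'' x - φ' x ^ 2 / 2 - x := by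
  have hW : ∀ z ∈ s, HasDerivWithinAt (fun t => φ t * φ'' t - φ' t ^ 2 / 2 - t) 0 s z := by
    intro z hz
    have h := (((hφ z hz).mul (hφ'' z hz)).sub (((hφ' z hz).fun_pow 2).div_const 2)).sub
      (hasDerivWithinAt_id z s)
    refine h.congr_deriv ?_
    field_simp [hne z hz]
    ring
  have := hs.norm_image_sub_le_of_norm_hasDerivWithin_le hW (fun _ _ => le_refl ‖(0:ℝ)‖) hx hy
  simpa [sub_eq_zero] using this

/-- Problem (1.4) with `ε = 1/k`; `φ'` and `φ''` are derivatives within `[0,1/2]`, one-sided at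
the endpoints. -/
structure IsApproxSolution (ε : ℝ) (φ φ' φ'' : ℝ → ℝ) : Prop where
  pos : ∀ x ∈ Icc (0:ℝ) (1/2), 0 < φ x
  hasDerivWithinAt : ∀ x ∈ Icc (0:ℝ) (1/2), HasDerivWithinAt φ (φ' x) (Icc 0 (1/2)) x
  hasDerivWithinAt' : ∀ x ∈ Icc (0:ℝ) (1/2), HasDerivWithinAt φ' (φ'' x) (Icc 0 (1/2)) x
  hasDerivWithinAt'' : ∀ x ∈ Icc (0:ℝ) (1/2), HasDerivWithinAt φ'' (1 / φ x) (Icc 0 (1/2)) x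
  apply_zero : φ 0 = ε
  apply_half : φ (1/2) = ε
  deriv_zero : φ' 0 = 1

namespace IsApproxSolution

variable {ε : ℝ} {φ φ' φ'' : ℝ → ℝ}

theorem continuousOn (h : IsApproxSolution ε φ φ' φ'') : ContinuousOn φ (Icc 0 (1/2)) :=
  fun x hx => (h.hasDerivWithinAt x hx).continuousWithinAt

theorem continuousOn' (h : IsApproxSolution ε φ φ' φ'') : ContinuousOn φ' (Icc 0 (1/2)) :=
  fun x hx => (h.hasDerivWithinAt' x hx).continuousWithinAt

theorem continuousOn'' (h : IsApproxSolution ε φ φ' φ'') : ContinuousOn φ'' (Icc 0 (1/2)) :=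
  fun x hx => (h.hasDerivWithinAt'' x hx).continuousWithinAt

theorem hasDerivAt (h : IsApproxSolution ε φ φ' φ'') {x : ℝ} (hx : x ∈ Ioo (0:ℝ) (1/2)) :
    HasDerivAt φ (φ' x) x :=
  (h.hasDerivWithinAt x (Ioo_subset_Icc_self hx)).hasDerivAt (Icc_mem_nhds hx.1 hx.2)

theorem hasDerivAt' (h : IsApproxSolution ε φ φ' φ'') {x : ℝ} (hx : x ∈ Ioo (0:ℝ) (1/2)) :
    HasDerivAt φ' (φ'' x) x :=
  (h.hasDerivWithinAt' x (Ioo_subset_Icc_self hx)).hasDerivAt (Icc_mem_nhds hx.1 hx.2)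

theorem hasDerivAt'' (h : IsApproxSolution ε φ φ' φ'') {x : ℝ} (hx : x ∈ Ioo (0:ℝ) (1/2)) :
    HasDerivAt φ'' (1 / φ x) x :=
  (h.hasDerivWithinAt'' x (Ioo_subset_Icc_self hx)).hasDerivAt (Icc_mem_nhds hx.1 hx.2)

theorem first_integral (h : IsApproxSolution ε φ φ' φ'') {x : ℝ} (hx : x ∈ Icc (0:ℝ) (1/2)) :
    φ x * φ'' x - φ' x ^ 2 / 2 - x = ε * φ'' 0 - 1 / 2 := by
  rw [first_integral_eq (convex_Icc 0 (1/2)) h.hasDerivWithinAt h.hasDerivWithinAt'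
    h.hasDerivWithinAt'' (fun y hy => (h.pos y hy).ne') (left_mem_Icc.2 (by norm_num)) hx,
    h.apply_zero, h.deriv_zero]
  ring

theorem strictMonoOn_deriv2 (h : IsApproxSolution ε φ φ' φ'') :
    StrictMonoOn φ'' (Icc 0 (1/2)) :=
  strictMonoOn_of_deriv_pos (convex_Icc 0 (1/2)) h.continuousOn'' fun x hx => by
    rw [interior_Icc] at hx
    rw [(h.hasDerivAt'' hx).deriv]
    exact one_div_pos.2 (h.pos x (Ioo_subset_Icc_self hx))

theorem deriv2_zero_neg (h : IsApproxSolution ε φ φ' φ'') : φ'' 0 < 0 := by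
  have h0 : (0:ℝ) ∈ Icc (0:ℝ) (1/2) := left_mem_Icc.2 (by norm_num)
  by_contra! hA
  have hmono' : StrictMonoOn φ' (Icc 0 (1/2)) :=
    strictMonoOn_of_deriv_pos (convex_Icc 0 (1/2)) h.continuousOn' fun x hx => by
      rw [interior_Icc] at hx
      rw [(h.hasDerivAt' hx).deriv]
      exact hA.trans_lt (h.strictMonoOn_deriv2 h0 (Ioo_subset_Icc_self hx) hx.1)
  have hmono : StrictMonoOn φ (Icc 0 (1/2)) :=
    strictMonoOn_of_deriv_pos (convex_Icc 0 (1/2)) h.continuousOn fun x hx => by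
      rw [interior_Icc] at hx
      rw [(h.hasDerivAt hx).deriv]
      linarith [hmono' h0 (Ioo_subset_Icc_self hx) hx.1, h.deriv_zero]
  exact (hmono h0 (right_mem_Icc.2 (by norm_num)) (by norm_num)).ne
    (h.apply_zero.trans h.apply_half.symm)

theorem not_isLocalMin (h : IsApproxSolution ε φ φ' φ'') (hε : 0 < ε) {x : ℝ}
    (hx : x ∈ Ioo (0:ℝ) (1/2)) : ¬ IsLocalMin φ x := by
  intro hmin
  have hφ' : φ' x = 0 := hmin.hasDerivAt_eq_zero (h.hasDerivAt hx)
  have hφ'' : 0 ≤ φ'' x := hmin.nonneg_of_hasDerivAt_of_hasDerivAt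
    (eventually_of_mem (Ioo_mem_nhds hx.1 hx.2) fun y hy => h.hasDerivAt hy) (h.hasDerivAt' hx)
  have hint := h.first_integral (Ioo_subset_Icc_self hx)
  have hprod := mul_nonneg (h.pos x (Ioo_subset_Icc_self hx)).le hφ''
  have hA := mul_neg_of_pos_of_neg hε h.deriv2_zero_neg
  rw [hφ'] at hint
  linarith [hx.2]

theorem le_apply (h : IsApproxSolution ε φ φ' φ'') (hε : 0 < ε) :
    ∀ x ∈ Icc (0:ℝ) (1/2), ε ≤ φ x :=
  h.continuousOn.le_of_forall_isLocalMin h.apply_zero.ge h.apply_half.ge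
    fun _ hx hmin => absurd hmin (h.not_isLocalMin hε hx)

theorem mul_deriv2_sub_le (h : IsApproxSolution ε φ φ' φ'') (hε : 0 < ε) :
    ε * (φ'' (1/2) - φ'' 0) ≤ 1 / 2 := by
  obtain ⟨c, hc, hslope⟩ := exists_hasDerivAt_eq_slope φ'' (fun x => 1 / φ x)
    (by norm_num : (0:ℝ) < 1/2) h.continuousOn'' fun x hx => h.hasDerivAt'' hx
  have hφc := h.pos c (Ioo_subset_Icc_self hc)
  have hdiff : φ'' (1/2) - φ'' 0 = 1 / φ c / 2 := by rw [hslope]; ring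
  calc ε * (φ'' (1/2) - φ'' 0) = ε / φ c / 2 := by rw [hdiff]; ring
    _ ≤ 1 / 2 := by
      gcongr
      exact div_le_one_of_le₀ (h.le_apply hε c (Ioo_subset_Icc_self hc)) hφc.le

theorem sq_deriv_half_le_one (h : IsApproxSolution ε φ φ' φ'') (hε : 0 < ε) :
    φ' (1/2) ^ 2 ≤ 1 := by
  have hint := h.first_integral (right_mem_Icc.2 (by norm_num))
  rw [h.apply_half] at hint
  linarith [h.mul_deriv2_sub_le hε]

theorem sq_deriv_le_two_of_deriv2_eq_zero (h : IsApproxSolution ε φ φ' φ'') (hε : 0 < ε)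
    {x : ℝ} (hx : x ∈ Ioo (0:ℝ) (1/2)) (hx₀ : φ'' x = 0) : φ' x ^ 2 ≤ 2 := by
  have hB : 0 < φ'' (1/2) :=
    hx₀ ▸ h.strictMonoOn_deriv2 (Ioo_subset_Icc_self hx) (right_mem_Icc.2 (by norm_num)) hx.2
  have hint := h.first_integral (Ioo_subset_Icc_self hx)
  rw [hx₀, mul_zero] at hint
  nlinarith [h.mul_deriv2_sub_le hε, mul_pos hε hB, hx.1]

theorem abs_deriv_le_two (h : IsApproxSolution ε φ φ' φ'') (hε : 0 < ε) :
    ∀ x ∈ Icc (0:ℝ) (1/2), |φ' x| ≤ 2 := by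
  refine h.continuousOn'.abs_le_of_forall_deriv_eq_zero (by norm_num [h.deriv_zero])
    (((sq_le_one_iff_abs_le_one _).1 (h.sq_deriv_half_le_one hε)).trans one_le_two)
    fun x hx hcrit => abs_le_of_sq_le_sq ?_ zero_le_two
  rw [(h.hasDerivAt' hx).deriv] at hcrit
  linarith [h.sq_deriv_le_two_of_deriv2_eq_zero hε hx hcrit]

theorem apply_le_two (h : IsApproxSolution ε φ φ' φ'') (hε : 0 < ε) (hε₁ : ε ≤ 1) :
    ∀ x ∈ Icc (0:ℝ) (1/2), φ x ≤ 2 := by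
  intro x hx
  have := (convex_Icc (0:ℝ) (1/2)).norm_image_sub_le_of_norm_hasDerivWithin_le
    h.hasDerivWithinAt (fun y hy => h.abs_deriv_le_two hε y hy) (left_mem_Icc.2 (by norm_num)) hx
  rw [Real.norm_eq_abs, Real.norm_eq_abs, sub_zero, abs_of_nonneg hx.1, h.apply_zero] at this
  linarith [le_abs_self (φ x - ε), hx.2]

end IsApproxSolution

theorem isApproxSolution_of_contDiffOn {ε : ℝ} {φ : ℝ → ℝ}
    (hreg : ContDiffOn ℝ 3 φ (Icc 0 (1/2))) (hpos : ∀ x ∈ Icc (0:ℝ) (1/2), 0 < φ x)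
    (hode : ∀ x ∈ Icc (0:ℝ) (1/2), iteratedDerivWithin 3 φ (Icc 0 (1/2)) x = 1 / φ x)
    (h₀ : φ 0 = ε) (h₁ : φ (1/2) = ε) (hd : derivWithin φ (Icc 0 (1/2)) 0 = 1) :
    IsApproxSolution ε φ (derivWithin φ (Icc 0 (1/2)))
      (derivWithin (derivWithin φ (Icc 0 (1/2))) (Icc 0 (1/2))) := by
  have hU : UniqueDiffOn ℝ (Icc (0:ℝ) (1/2)) := uniqueDiffOn_Icc (by norm_num)
  have hreg' := hreg.derivWithin hU (m := 2) (by norm_num)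
  have hreg'' := hreg'.derivWithin hU (m := 1) (by norm_num)
  refine ⟨hpos, fun x hx => ?_, fun x hx => ?_, fun x hx => ?_, h₀, h₁, hd⟩
  · exact (hreg.differentiableOn (by norm_num) x hx).hasDerivWithinAt
  · exact (hreg'.differentiableOn (by norm_num) x hx).hasDerivWithinAt
  · rw [← hode x hx, iteratedDerivWithin_eq_iterate]
    exact (hreg''.differentiableOn one_ne_zero x hx).hasDerivWithinAt

/-- The uniform `C¹[0,1/2]` bound: there is `M > 0`, independent of `k`, such that every
solution of the approximating problem (1.4) satisfies `|φ| ≤ M` and `|φ'| ≤ M` on `[0,1/2]`. -/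
theorem approximating_solutions_uniform_C1_bound :
    ∃ M > (0:ℝ), ∀ k : ℕ, 1 ≤ k → ∀ φ : ℝ → ℝ,
      ContDiffOn ℝ 3 φ (Set.Icc 0 (1/2)) →
      (∀ η ∈ Set.Icc (0:ℝ) (1/2), 0 < φ η) →
      (∀ η ∈ Set.Icc (0:ℝ) (1/2),
        iteratedDerivWithin 3 φ (Set.Icc 0 (1/2)) η = 1 / φ η) →
      φ 0 = 1 / k → φ (1/2) = 1 / k →
      derivWithin φ (Set.Icc 0 (1/2)) 0 = 1 →
      ∀ η ∈ Set.Icc (0:ℝ) (1/2),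
        |φ η| ≤ M ∧ |derivWithin φ (Set.Icc 0 (1/2)) η| ≤ M := by
  refine ⟨2, two_pos, fun k hk φ hreg hpos hode h₀ h₁ hd η hη => ?_⟩
  have hsol := isApproxSolution_of_contDiffOn hreg hpos hode h₀ h₁ hd
  have hk' : (1:ℝ) ≤ k := by exact_mod_cast hk
  have hε : (0:ℝ) < 1 / k := by positivity
  have hε₁ : 1 / (k:ℝ) ≤ 1 := (div_le_one (by positivity)).2 hk'
  rw [abs_of_pos (hpos η hη)]
  exact ⟨hsol.apply_le_two hε hε₁ η hη, hsol.abs_deriv_le_two hε η hη⟩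
end

section
/- Let φ be the traveling-wave profile. Then φ is twice continuously differentiable on (0,1/2) and satisfies φ(η)·φ''(η) = (1/2)·(φ'(η))² + η − 1/2 for all η ∈ (0,1/2). -/
open Set Filter Topology

noncomputable def firstIntegral (φ : ℝ → ℝ) (η : ℝ) : ℝ :=
  φ η * deriv (deriv φ) η - 1 / 2 * deriv φ η ^ 2 - η

theorem hasDerivAt_firstIntegral {φ : ℝ → ℝ} {x : ℝ} (h₀ : DifferentiableAt ℝ φ x)
    (h₁ : DifferentiableAt ℝ (deriv φ) x) (h₂ : DifferentiableAt ℝ (deriv (deriv φ)) x)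
    (hode : φ x * deriv (deriv (deriv φ)) x = 1) :
    HasDerivAt (firstIntegral φ) 0 x := by
  have H := ((h₀.hasDerivAt.mul h₂.hasDerivAt).sub
    ((h₁.hasDerivAt.pow 2).const_mul (1 / 2 : ℝ))).sub (hasDerivAt_id x)
  refine H.congr_deriv ?_
  simp only [Nat.cast_ofNat]
  linear_combination hode

theorem ContDiffOn.hasDerivAt_deriv {f : ℝ → ℝ} {s : Set ℝ} {n : WithTop ℕ∞} {x : ℝ}
    (hf : ContDiffOn ℝ n f s) (hs : IsOpen s) (hn : 2 ≤ n) (hx : x ∈ s) :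
    HasDerivAt (deriv f) (deriv (deriv f) x) x :=
  (((hf.deriv_of_isOpen hs (m := 1) hn).differentiableOn one_ne_zero).differentiableAt
    (hs.mem_nhds hx)).hasDerivAt

theorem IsOpen.exists_firstIntegral_eq {φ : ℝ → ℝ} {s : Set ℝ} (hs : IsOpen s)
    (hs' : IsPreconnected s) (hφ : ContDiffOn ℝ 3 φ s)
    (hode : ∀ η ∈ s, φ η * deriv (deriv (deriv φ)) η = 1) :
    ∃ C, ∀ η ∈ s, firstIntegral φ η = C := by
  have hφ' : ContDiffOn ℝ 2 (deriv φ) s := hφ.deriv_of_isOpen hs (by norm_num)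
  have hderiv (x) (hx : x ∈ s) : HasDerivAt (firstIntegral φ) 0 x :=
    hasDerivAt_firstIntegral ((hφ.differentiableOn (by norm_num)).differentiableAt (hs.mem_nhds hx))
      (hφ.hasDerivAt_deriv hs (by norm_num) hx).differentiableAt
      (hφ'.hasDerivAt_deriv hs le_rfl hx).differentiableAt (hode x hx)
  exact hs.exists_is_const_of_deriv_eq_zero hs'
    (fun x hx => (hderiv x hx).differentiableAt.differentiableWithinAt)
    (fun x hx => (hderiv x hx).deriv)

theorem ContDiffOn.tendsto_deriv_nhdsGT {f : ℝ → ℝ} {a b : ℝ} (hab : a < b)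
    (hf : ContDiffOn ℝ 1 f (Icc a b)) :
    Tendsto (deriv f) (𝓝[>] a) (𝓝 (derivWithin f (Icc a b) a)) := by
  have hcont : ContinuousWithinAt (derivWithin f (Icc a b)) (Icc a b) a :=
    hf.continuousOn_derivWithin (uniqueDiffOn_Icc hab) le_rfl a (left_mem_Icc.2 hab.le)
  refine (hcont.tendsto.mono_left (nhdsWithin_le_of_mem (Icc_mem_nhdsGT hab))).congr' ?_
  filter_upwards [Ioo_mem_nhdsGT hab] with t ht
  exact derivWithin_of_mem_nhds (Icc_mem_nhds ht.1 ht.2)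

theorem HasDerivWithinAt.eventually_lt_add_mul_nhdsGT {f : ℝ → ℝ} {f' a r : ℝ}
    (hf : HasDerivWithinAt f f' (Ioi a) a) (hr : f' < r) :
    ∀ᶠ t in 𝓝[>] a, f t < f a + r * (t - a) := by
  filter_upwards [hf.limsup_slope_le' (lt_irrefl a) hr, self_mem_nhdsWithin] with t hslope ht
  rw [slope_def_field, div_lt_iff₀ (sub_pos.2 ht)] at hslope
  linarith

theorem tendsto_atBot_of_div_le_deriv {f f' : ℝ → ℝ} {k : ℝ} (hk : 0 < k)
    (hf : ∀ᶠ t in 𝓝[>] 0, HasDerivAt f (f' t) t) (hle : ∀ᶠ t in 𝓝[>] 0, k / t ≤ f' t) :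
    Tendsto f (𝓝[>] 0) atBot := by
  obtain ⟨a, ha, hsub⟩ := mem_nhdsGT_iff_exists_Ioo_subset.1 (hf.and hle)
  have hmono : MonotoneOn (fun t => f t - k * Real.log t) (Ioo 0 a) := by
    have hderiv (t) (ht : t ∈ Ioo 0 a) :
        HasDerivAt (fun t => f t - k * Real.log t) (f' t - k * t⁻¹) t :=
      (hsub ht).1.sub ((Real.hasDerivAt_log ht.1.ne').const_mul k)
    refine monotoneOn_of_hasDerivWithinAt_nonneg (f' := fun t => f' t - k * t⁻¹) (convex_Ioo 0 a)
      (fun t ht => (hderiv t ht).continuousAt.continuousWithinAt) ?_ ?_ <;>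
      rw [interior_Ioo]
    · exact fun t ht => (hderiv t ht).hasDerivWithinAt
    · intro t ht
      have := (hsub ht).2
      rw [div_eq_mul_inv] at this
      linarith
  have hc : a / 2 ∈ Ioo 0 a := ⟨half_pos ha, half_lt_self ha⟩
  have hlog : Tendsto (fun t => k * Real.log t + (f (a / 2) - k * Real.log (a / 2)))
      (𝓝[>] 0) atBot :=
    tendsto_atBot_add_const_right _ _
      ((tendsto_const_mul_atBot_of_pos hk).2 Real.tendsto_log_nhdsGT_zero)
  refine tendsto_atBot_mono' _ ?_ hlog
  filter_upwards [Ioo_mem_nhdsGT hc.1] with t ht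
  have := hmono ⟨ht.1, ht.2.trans hc.2⟩ hc ht.2.le
  simp only at this
  linarith

theorem nonpos_of_tendsto_mul_deriv {f g g' : ℝ → ℝ} {M L K : ℝ} (hM : 0 < M)
    (hf_pos : ∀ᶠ t in 𝓝[>] 0, 0 < f t) (hf_le : ∀ᶠ t in 𝓝[>] 0, f t ≤ M * t)
    (hg : ∀ᶠ t in 𝓝[>] 0, HasDerivAt g (g' t) t) (hgL : Tendsto g (𝓝[>] 0) (𝓝 L))
    (hK : Tendsto (fun t => f t * g' t) (𝓝[>] 0) (𝓝 K)) : K ≤ 0 := by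
  by_contra! hKpos
  refine not_tendsto_nhds_of_tendsto_atBot ?_ L hgL
  refine tendsto_atBot_of_div_le_deriv (k := K / (2 * M)) (by positivity) hg ?_
  filter_upwards [hf_pos, hf_le, hK.eventually (lt_mem_nhds (half_lt_self hKpos)),
    self_mem_nhdsWithin] with t hft hftM hfg (ht : 0 < t)
  -- `K / 2 < f g'` with `0 < f ≤ M t` gives `g' > K / (2 f) ≥ K / (2 M t)`
  rw [div_div, div_le_iff₀ (by positivity)]
  have hg'pos : 0 < g' t := pos_of_mul_pos_right (by linarith) hft.le
  nlinarith [mul_le_mul_of_nonneg_left hftM hg'pos.le]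

theorem eq_zero_of_tendsto_mul_deriv {f g g' : ℝ → ℝ} {M L K : ℝ} (hM : 0 < M)
    (hf_pos : ∀ᶠ t in 𝓝[>] 0, 0 < f t) (hf_le : ∀ᶠ t in 𝓝[>] 0, f t ≤ M * t)
    (hg : ∀ᶠ t in 𝓝[>] 0, HasDerivAt g (g' t) t) (hgL : Tendsto g (𝓝[>] 0) (𝓝 L))
    (hK : Tendsto (fun t => f t * g' t) (𝓝[>] 0) (𝓝 K)) : K = 0 := by
  refine le_antisymm (nonpos_of_tendsto_mul_deriv hM hf_pos hf_le hg hgL hK) ?_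
  have hK' : Tendsto (fun t => f t * -g' t) (𝓝[>] 0) (𝓝 (-K)) := by
    simpa only [mul_neg] using hK.neg
  exact neg_nonpos.1 <| nonpos_of_tendsto_mul_deriv hM hf_pos hf_le
    (hg.mono fun t ht => ht.neg) hgL.neg hK'

/-- The first integral (2.1) of the traveling-wave equation:
`φ·φ'' = (1/2)(φ')² + η − 1/2` on `(0,1/2)`. -/
theorem traveling_wave_first_integral (φ : ℝ → ℝ) (hφ : IsTWProfile φ) :
    ContDiffOn ℝ 2 φ (Set.Ioo 0 (1/2)) ∧
    ∀ η ∈ Set.Ioo (0:ℝ) (1/2),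
      φ η * deriv (deriv φ) η = (1/2) * (deriv φ η)^2 + η - 1/2 := by
  obtain ⟨h1, h3, hpos, h00, -, hd0, hode⟩ := hφ
  refine ⟨h3.of_le (by norm_num), ?_⟩
  obtain ⟨C, hC⟩ := isOpen_Ioo.exists_firstIntegral_eq isPreconnected_Ioo h3 hode
  have hI : ∀ᶠ t in 𝓝[>] (0 : ℝ), t ∈ Ioo 0 (1 / 2) := Ioo_mem_nhdsGT (by norm_num)
  have hφ' : Tendsto (deriv φ) (𝓝[>] 0) (𝓝 1) := hd0 ▸ h1.tendsto_deriv_nhdsGT (by norm_num)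
  have hφ_le : ∀ᶠ t in 𝓝[>] 0, φ t ≤ 2 * t := by
    have h : HasDerivWithinAt φ 1 (Ioi 0) 0 :=
      hd0 ▸ (h1.differentiableOn one_ne_zero 0 (by norm_num)).hasDerivWithinAt
        |>.mono_of_mem_nhdsWithin (Icc_mem_nhdsGT (by norm_num))
    filter_upwards [h.eventually_lt_add_mul_nhdsGT one_lt_two] with t ht
    linarith
  have hlim : Tendsto (fun t => φ t * deriv (deriv φ) t) (𝓝[>] 0) (𝓝 (C + 1 / 2)) := by
    have h : Tendsto (fun t => C + 1 / 2 * deriv φ t ^ 2 + t) (𝓝[>] 0)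
        (𝓝 (C + 1 / 2 * 1 ^ 2 + 0)) :=
      ((hφ'.pow 2).const_mul _).const_add C |>.add nhdsWithin_le_nhds
    rw [one_pow, mul_one, add_zero] at h
    refine h.congr' ?_
    filter_upwards [hI] with t ht
    have := hC t ht
    unfold firstIntegral at this
    linarith
  have hC' : C + 1 / 2 = 0 := eq_zero_of_tendsto_mul_deriv two_pos (hI.mono hpos) hφ_le
    (hI.mono fun t ht => h3.hasDerivAt_deriv isOpen_Ioo (by norm_num) ht) hφ' hlim
  intro η hη
  have := hC η hη
  unfold firstIntegral at this
  linarith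
end

section
/- Let d > 0 and A₀ > 0, and define φ₀(η) = A₀·η·(d − η)^{3/2} for η ∈ [0,d]. If A₀²·d² ≤ 5/3, then φ₀(η)·φ₀''(η) ≥ (1/2)·(φ₀'(η))² + η − d for all η ∈ (0,d). -/
/-!
Writing `s = √(d - η)`, the profile `φ₀ = A₀ η s³` has `φ₀' = A₀ s (d - 5η/2)` and
`φ₀'' = -3A₀ s + (3/4) A₀ η / s`, so `φ₀φ₀'' - φ₀'²/2 - (η - d) = (d - η)(1 - A₀² q(η))` with
`q(η) = d²/2 + dη/2 - 5η²/8`. The quadratic `q` peaks at `η = 2d/5` with value `3d²/5`, hence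
`A₀² q ≤ 1` exactly when `A₀²d² ≤ 5/3`.
-/

open Real

section Profile

variable (A d : ℝ)

theorem hasDerivAt_const_sub_rpow {p x : ℝ} (h : d - x ≠ 0 ∨ 1 ≤ p) :
    HasDerivAt (fun y => (d - y) ^ p) (-(p * (d - x) ^ (p - 1))) x := by
  simpa using ((hasDerivAt_id x).const_sub d).rpow_const h

theorem hasDerivAt_profile (x : ℝ) :
    HasDerivAt (fun y => A * y * (d - y) ^ ((3:ℝ)/2))
      (A * (d - x) ^ ((3:ℝ)/2) - 3/2 * A * x * (d - x) ^ ((1:ℝ)/2)) x := by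
  have h := ((hasDerivAt_id' x).const_mul A).fun_mul
    (hasDerivAt_const_sub_rpow d (p := (3:ℝ)/2) (Or.inr (by norm_num)))
  refine h.congr_deriv ?_
  rw [show (3:ℝ)/2 - 1 = 1/2 by norm_num]
  ring

theorem deriv_profile :
    deriv (fun y => A * y * (d - y) ^ ((3:ℝ)/2)) =
      fun x => A * (d - x) ^ ((3:ℝ)/2) - 3/2 * A * x * (d - x) ^ ((1:ℝ)/2) :=
  funext fun x => (hasDerivAt_profile A d x).deriv

theorem hasDerivAt_deriv_profile {x : ℝ} (hx : x < d) :
    HasDerivAt (deriv fun y => A * y * (d - y) ^ ((3:ℝ)/2))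
      (-3 * A * (d - x) ^ ((1:ℝ)/2) + 3/4 * A * x * (d - x) ^ (-(1:ℝ)/2)) x := by
  have hne : d - x ≠ 0 := (sub_pos.2 hx).ne'
  have h32 := (hasDerivAt_const_sub_rpow d (p := (3:ℝ)/2) (Or.inl hne)).const_mul A
  have h12 := ((hasDerivAt_id' x).const_mul (3/2 * A)).fun_mul
    (hasDerivAt_const_sub_rpow d (p := (1:ℝ)/2) (Or.inl hne))
  rw [deriv_profile]
  refine (h32.fun_sub h12).congr_deriv ?_
  rw [show (3:ℝ)/2 - 1 = 1/2 by norm_num, show (1:ℝ)/2 - 1 = -(1:ℝ)/2 by norm_num]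
  ring

theorem profile_first_integral_le {x : ℝ} (hx : x < d) (hcond : A ^ 2 * d ^ 2 ≤ 5/3) :
    1/2 * (A * (d - x) ^ ((3:ℝ)/2) - 3/2 * A * x * (d - x) ^ ((1:ℝ)/2)) ^ 2 + x - d ≤
      A * x * (d - x) ^ ((3:ℝ)/2) *
        (-3 * A * (d - x) ^ ((1:ℝ)/2) + 3/4 * A * x * (d - x) ^ (-(1:ℝ)/2)) := by
  have ht : 0 < d - x := sub_pos.2 hx
  have hq : A ^ 2 * (d ^ 2 / 2 + d * x / 2 - 5/8 * x ^ 2) ≤ 1 := by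
    nlinarith [mul_nonneg (sq_nonneg A) (sq_nonneg (x - 2/5 * d))]
  set s := (d - x) ^ ((1:ℝ)/2)
  have hs : s ^ 2 = d - x := by rw [← rpow_natCast, ← rpow_mul ht.le]; norm_num
  have h32 : (d - x) ^ ((3:ℝ)/2) = (d - x) * s := by
    rw [show (3:ℝ)/2 = 1 + 1/2 by norm_num, rpow_add ht, rpow_one]
  have hinv : (d - x) ^ (-(1:ℝ)/2) * s = 1 := by
    rw [← rpow_add ht]; norm_num
  set u := (d - x) ^ (-(1:ℝ)/2)
  have key : A * x * ((d - x) * s) * (-3 * A * s + 3/4 * A * x * u) -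
      (1/2 * (A * ((d - x) * s) - 3/2 * A * x * s) ^ 2 + x - d) =
      (d - x) * (1 - A ^ 2 * (d ^ 2 / 2 + d * x / 2 - 5/8 * x ^ 2)) := by
    linear_combination (-3 * A ^ 2 * x * (d - x) - 1/2 * A ^ 2 * (d - x - 3/2 * x) ^ 2) * hs +
      (3/4 * A ^ 2 * x ^ 2 * (d - x)) * hinv
  rw [h32, ← sub_nonneg, key]
  exact mul_nonneg ht.le (sub_nonneg.2 hq)

end Profile

theorem supersolution_of_first_integral_general (d A₀ : ℝ)
    (hcond : A₀^2 * d^2 ≤ 5/3)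
    (φ₀ : ℝ → ℝ) (hφ₀ : ∀ η, φ₀ η = A₀ * η * (d - η) ^ ((3:ℝ)/2)) :
    ∀ η ∈ Set.Ioo (0:ℝ) d,
      φ₀ η * deriv (deriv φ₀) η ≥ (1/2) * (deriv φ₀ η)^2 + η - d := by
  intro η hη
  obtain rfl : φ₀ = fun y => A₀ * y * (d - y) ^ ((3:ℝ)/2) := funext hφ₀
  rw [(hasDerivAt_deriv_profile A₀ d hη.2).deriv, deriv_profile]
  exact profile_first_integral_le A₀ d hη.2 hcond

/-- Inequality (2.2) of Lemma 2.1: `φ₀(η) = A₀·η·(d − η)^{3/2}` is a supersolution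
of `φφ'' = (1/2)(φ')² + η − d` when `A₀²d² ≤ 5/3`. -/
theorem supersolution_of_first_integral (d A₀ : ℝ) (hd : 0 < d) (hA : 0 < A₀)
    (hcond : A₀^2 * d^2 ≤ 5/3)
    (φ₀ : ℝ → ℝ) (hφ₀ : ∀ η, φ₀ η = A₀ * η * (d - η) ^ ((3:ℝ)/2)) :
    ∀ η ∈ Set.Ioo (0:ℝ) d,
      φ₀ η * deriv (deriv φ₀) η ≥ (1/2) * (deriv φ₀ η)^2 + η - d :=
  supersolution_of_first_integral_general d A₀ hcond φ₀ hφ₀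
end

section
/- Let d > 0 and let φ : [0,d] → ℝ be continuous on [0,d], twice continuously differentiable on (0,d), with φ(η) > 0 for all η ∈ (0,d), φ(0) = φ(d) = 0, and φ(η)·φ''(η) = (1/2)·(φ'(η))² + η − d for all η ∈ (0,d). If A₂ > 0 satisfies A₂²·d² ≥ 8/3, then φ(η) ≤ A₂·η·(d − η)^{3/2} for all η ∈ [0,d]. -/
/-!
Write `g η = A₂ η (d - η)^{3/2}`. For positive `ψ` one has
`(√ψ)'' = (ψ ψ'' - ψ'² / 2) / (2 ψ^{3/2})`, so `(√φ)'' = (η - d) / (2 φ^{3/2})`, while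
`A₂² d² ≥ 8/3` makes `g` a supersolution, `(√g)'' ≤ (η - d) / (2 g^{3/2})`. Since `η - d < 0`,
wherever `φ > g` the first bound is the larger one, so `√φ - √g` is convex on every interval on
which it is positive. It vanishes at the ends of such an interval, hence it is positive nowhere.
-/

open Real Set

theorem exists_Ioo_pos_of_pos {w : ℝ → ℝ} {p q x₀ : ℝ} (hw : ContinuousOn w (Icc p q))
    (hp : w p ≤ 0) (hq : w q ≤ 0) (hx₀ : x₀ ∈ Icc p q) (hwx₀ : 0 < w x₀) :
    ∃ a b, p ≤ a ∧ b ≤ q ∧ w a ≤ 0 ∧ w b ≤ 0 ∧ x₀ ∈ Ioo a b ∧ ∀ x ∈ Ioo a b, 0 < w x := by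
  set L := Icc p x₀ ∩ w ⁻¹' Iic 0
  set R := Icc x₀ q ∩ w ⁻¹' Iic 0
  have hL_bdd : BddAbove L := ⟨x₀, fun x hx => hx.1.2⟩
  have hR_bdd : BddBelow R := ⟨x₀, fun x hx => hx.1.1⟩
  have ha : sSup L ∈ L :=
    ((hw.mono (Icc_subset_Icc_right hx₀.2)).preimage_isClosed_of_isClosed isClosed_Icc
      isClosed_Iic).csSup_mem ⟨p, ⟨le_rfl, hx₀.1⟩, hp⟩ hL_bdd
  have hb : sInf R ∈ R :=
    ((hw.mono (Icc_subset_Icc_left hx₀.1)).preimage_isClosed_of_isClosed isClosed_Icc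
      isClosed_Iic).csInf_mem ⟨q, ⟨hx₀.2, le_rfl⟩, hq⟩ hR_bdd
  refine ⟨sSup L, sInf R, ha.1.1, hb.1.2, ha.2, hb.2,
    ⟨ha.1.2.lt_of_ne ?_, hb.1.1.lt_of_ne' ?_⟩, fun x hx => ?_⟩
  · rintro h; exact (h ▸ ha.2 : w x₀ ≤ 0).not_gt hwx₀
  · rintro h; exact (h ▸ hb.2 : w x₀ ≤ 0).not_gt hwx₀
  by_contra! hwx
  rcases le_total x x₀ with hxx₀ | hx₀x
  · exact hx.1.not_ge (le_csSup hL_bdd ⟨⟨ha.1.1.trans hx.1.le, hxx₀⟩, hwx⟩)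
  · exact hx.2.not_ge (csInf_le hR_bdd ⟨⟨hx₀x, hx.2.le.trans hb.1.2⟩, hwx⟩)

theorem nonpos_of_deriv2_nonneg_of_pos {w w' w'' : ℝ → ℝ} {p q : ℝ}
    (hw : ContinuousOn w (Icc p q)) (hp : w p ≤ 0) (hq : w q ≤ 0)
    (hw' : ∀ x ∈ Ioo p q, 0 < w x → HasDerivAt w (w' x) x)
    (hw'' : ∀ x ∈ Ioo p q, 0 < w x → HasDerivAt w' (w'' x) x)
    (hw''₀ : ∀ x ∈ Ioo p q, 0 < w x → 0 ≤ w'' x) :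
    ∀ x ∈ Icc p q, w x ≤ 0 := by
  intro x₀ hx₀
  by_contra! hwx₀
  obtain ⟨a, b, hpa, hbq, hwa, hwb, hx₀ab, hpos⟩ := exists_Ioo_pos_of_pos hw hp hq hx₀ hwx₀
  have hsub : Ioo a b ⊆ Ioo p q := Ioo_subset_Ioo hpa hbq
  have hconv : ConvexOn ℝ (Icc a b) w := by
    refine convexOn_of_hasDerivWithinAt2_nonneg (f' := w') (f'' := w'') (convex_Icc a b)
      (hw.mono (Icc_subset_Icc hpa hbq)) ?_ ?_ ?_ <;> rw [interior_Icc] <;> intro x hx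
    · exact (hw' x (hsub hx) (hpos x hx)).hasDerivWithinAt
    · exact (hw'' x (hsub hx) (hpos x hx)).hasDerivWithinAt
    · exact hw''₀ x (hsub hx) (hpos x hx)
  have hab : a ≤ b := (hx₀ab.1.trans hx₀ab.2).le
  have := hconv.le_on_segment (left_mem_Icc.2 hab) (right_mem_Icc.2 hab)
    (by rw [segment_eq_Icc hab]; exact Ioo_subset_Icc_self hx₀ab)
  exact (this.trans (max_le hwa hwb)).not_gt hwx₀

theorem hasDerivAt_div_two_sqrt {ψ ψ' : ℝ → ℝ} {x ψ'' : ℝ} (hψ : 0 < ψ x)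
    (h₁ : HasDerivAt ψ (ψ' x) x) (h₂ : HasDerivAt ψ' ψ'' x) :
    HasDerivAt (fun y => ψ' y / (2 * √(ψ y)))
      ((ψ x * ψ'' - ψ' x ^ 2 / 2) / (2 * ψ x * √(ψ x))) x := by
  refine (h₂.div ((h₁.sqrt hψ.ne').const_mul 2) (by positivity)).congr_deriv ?_
  set s := √(ψ x) with hs
  rw [← sq_sqrt hψ.le, ← hs]
  field_simp

theorem le_of_subsolution_of_supersolution {p q : ℝ} {f φ φ' φ'' g g' g'' : ℝ → ℝ}
    (hφ : ContinuousOn φ (Icc p q)) (hg : ContinuousOn g (Icc p q))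
    (hp : φ p ≤ g p) (hq : φ q ≤ g q) (hg_pos : ∀ x ∈ Ioo p q, 0 < g x)
    (hφ' : ∀ x ∈ Ioo p q, HasDerivAt φ (φ' x) x) (hφ'' : ∀ x ∈ Ioo p q, HasDerivAt φ' (φ'' x) x)
    (hg' : ∀ x ∈ Ioo p q, HasDerivAt g (g' x) x) (hg'' : ∀ x ∈ Ioo p q, HasDerivAt g' (g'' x) x)
    (hf : ∀ x ∈ Ioo p q, f x ≤ 0)
    (hφ_sub : ∀ x ∈ Ioo p q, f x ≤ φ x * φ'' x - φ' x ^ 2 / 2)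
    (hg_super : ∀ x ∈ Ioo p q, g x * g'' x - g' x ^ 2 / 2 ≤ f x) :
    ∀ x ∈ Icc p q, φ x ≤ g x := by
  have hgt : ∀ x ∈ Ioo p q, 0 < √(φ x) - √(g x) → g x < φ x := fun x hx h =>
    (sqrt_lt_sqrt_iff (hg_pos x hx).le).1 (sub_pos.1 h)
  have hsqrt : ∀ x ∈ Icc p q, √(φ x) - √(g x) ≤ 0 := by
    refine nonpos_of_deriv2_nonneg_of_pos
      (w' := fun y => φ' y / (2 * √(φ y)) - g' y / (2 * √(g y)))
      (w'' := fun y => (φ y * φ'' y - φ' y ^ 2 / 2) / (2 * φ y * √(φ y))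
        - (g y * g'' y - g' y ^ 2 / 2) / (2 * g y * √(g y)))
      ((continuous_sqrt.comp_continuousOn hφ).sub (continuous_sqrt.comp_continuousOn hg))
      (sub_nonpos.2 (sqrt_le_sqrt hp)) (sub_nonpos.2 (sqrt_le_sqrt hq)) ?_ ?_ ?_
      <;> intro x hx hw <;> have hgx := hg_pos x hx <;> have hφx := hgx.trans (hgt x hx hw)
    · exact ((hφ' x hx).sqrt hφx.ne').sub ((hg' x hx).sqrt hgx.ne')
    · exact (hasDerivAt_div_two_sqrt hφx (hφ' x hx) (hφ'' x hx)).sub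
        (hasDerivAt_div_two_sqrt hgx (hg' x hx) (hg'' x hx))
    · have hpow : 2 * g x * √(g x) ≤ 2 * φ x * √(φ x) := by
        gcongr
        exacts [(hgt x hx hw).le, (hgt x hx hw).le]
      rw [sub_nonneg]
      calc (g x * g'' x - g' x ^ 2 / 2) / (2 * g x * √(g x))
          ≤ f x / (2 * g x * √(g x)) := by gcongr; exact hg_super x hx
        _ ≤ f x / (2 * φ x * √(φ x)) := by
          simpa only [neg_div, neg_le_neg_iff] using
            div_le_div_of_nonneg_left (neg_nonneg.2 (hf x hx)) (by positivity) hpow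
        _ ≤ (φ x * φ'' x - φ' x ^ 2 / 2) / (2 * φ x * √(φ x)) := by gcongr; exact hφ_sub x hx
  intro x hx
  rcases eq_endpoints_or_mem_Ioo_of_mem_Icc hx with rfl | rfl | hx'
  · exact hp
  · exact hq
  · exact le_of_not_gt fun h =>
      (hsqrt x hx).not_gt (sub_pos.2 (sqrt_lt_sqrt (hg_pos x hx').le h))

theorem rpow_three_halves_eq_mul_sqrt {t : ℝ} (ht : 0 ≤ t) : t ^ ((3:ℝ)/2) = t * √t := by
  rw [show (3:ℝ)/2 = 1 + 1/2 by norm_num, rpow_add' ht (by norm_num), rpow_one, sqrt_eq_rpow]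

theorem hasDerivAt_const_sub_rpow_three_halves (d y : ℝ) :
    HasDerivAt (fun y => (d - y) ^ ((3:ℝ)/2)) (-(3/2 * √(d - y))) y := by
  have h := ((hasDerivAt_id' y).const_sub d).rpow_const (p := (3:ℝ)/2) (Or.inr (by norm_num))
  refine h.congr_deriv ?_
  rw [sqrt_eq_rpow]; norm_num

theorem hasDerivAt_barrier (A d y : ℝ) :
    HasDerivAt (fun y => A * y * (d - y) ^ ((3:ℝ)/2))
      (A * ((d - y) ^ ((3:ℝ)/2) - 3/2 * y * √(d - y))) y := by
  refine (((hasDerivAt_id' y).const_mul A).mul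
    (hasDerivAt_const_sub_rpow_three_halves d y)).congr_deriv ?_
  ring

theorem hasDerivAt_barrier_deriv (A : ℝ) {d y : ℝ} (hy : y < d) :
    HasDerivAt (fun y => A * ((d - y) ^ ((3:ℝ)/2) - 3/2 * y * √(d - y)))
      (A * (-3 * √(d - y) + 3/4 * y / √(d - y))) y := by
  have ht : 0 < d - y := sub_pos.2 hy
  have hsqrt := ((hasDerivAt_id' y).const_sub d).sqrt ht.ne'
  refine (((hasDerivAt_const_sub_rpow_three_halves d y).sub
    (((hasDerivAt_id' y).const_mul (3/2 : ℝ)).mul hsqrt)).const_mul A).congr_deriv ?_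
  have hs : 0 < √(d - y) := sqrt_pos.2 ht
  field_simp
  ring

theorem barrier_supersolution {A d y : ℝ} (hAd : 8/3 ≤ A ^ 2 * d ^ 2) (hy₀ : 0 ≤ y) (hy : y < d) :
    A * y * (d - y) ^ ((3:ℝ)/2) * (A * (-3 * √(d - y) + 3/4 * y / √(d - y)))
      - (A * ((d - y) ^ ((3:ℝ)/2) - 3/2 * y * √(d - y))) ^ 2 / 2 ≤ y - d := by
  -- `g g'' - g'² / 2 = -A² t (t² / 2 + 3 y t / 2 + 3 y² / 8)` with `t = d - y`, and the
  -- bracket is at least `3 d² / 8`.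
  have ht : 0 < d - y := sub_pos.2 hy
  rw [rpow_three_halves_eq_mul_sqrt ht.le]
  set s := √(d - y) with hs
  have hs_pos : 0 < s := sqrt_pos.2 ht
  have hd : d = s ^ 2 + y := by rw [hs, sq_sqrt ht.le]; ring
  rw [hd] at hAd ⊢
  rw [add_sub_cancel_right]
  have hbracket : 1 ≤ A ^ 2 * (s ^ 4 / 2 + 3/2 * y * s ^ 2 + 3/8 * y ^ 2) := by
    nlinarith [mul_nonneg (sq_nonneg A) (sq_nonneg (s ^ 2)),
      mul_nonneg (sq_nonneg A) (mul_nonneg hy₀ (sq_nonneg s))]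
  have hexpand : s ^ 2 * s * (A * y) * (A * (-3 * s + 3/4 * y / s))
      - (A * (s ^ 2 * s - 3/2 * y * s)) ^ 2 / 2
      = -(s ^ 2 * (A ^ 2 * (s ^ 4 / 2 + 3/2 * y * s ^ 2 + 3/8 * y ^ 2))) := by
    field_simp; ring
  nlinarith [hexpand, hbracket, sq_nonneg s]

theorem ContDiffOn.hasDerivAt_deriv_deriv {f : ℝ → ℝ} {s : Set ℝ} (hf : ContDiffOn ℝ 2 f s)
    (hs : IsOpen s) {x : ℝ} (hx : x ∈ s) : HasDerivAt (deriv f) (deriv (deriv f) x) x :=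
  (((hf.deriv_of_isOpen hs (m := 1) (by norm_num)).contDiffAt (hs.mem_nhds hx)).differentiableAt
    one_ne_zero).hasDerivAt

theorem upper_bound_for_first_integral_solution_general (d : ℝ) (φ : ℝ → ℝ)
    (hcont : ContinuousOn φ (Set.Icc 0 d))
    (hC2 : ContDiffOn ℝ 2 φ (Set.Ioo 0 d))
    (h0 : φ 0 = 0) (hdd : φ d = 0)
    (heq : ∀ η ∈ Set.Ioo (0:ℝ) d,
      φ η * deriv (deriv φ) η = (1/2) * (deriv φ η)^2 + η - d)
    (A₂ : ℝ) (hA : 0 < A₂) (hcond : A₂^2 * d^2 ≥ 8/3) :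
    ∀ η ∈ Set.Icc (0:ℝ) d, φ η ≤ A₂ * η * (d - η) ^ ((3:ℝ)/2) := by
  have hbarrier_cont : Continuous fun y : ℝ => A₂ * y * (d - y) ^ ((3:ℝ)/2) :=
    (continuous_const.mul continuous_id).mul
      ((continuous_const.sub continuous_id).rpow_const fun _ => Or.inr (by norm_num))
  refine le_of_subsolution_of_supersolution (f := fun η => η - d) hcont
    hbarrier_cont.continuousOn (by simp [h0]) (by simp [hdd])
    (fun η hη => mul_pos (mul_pos hA hη.1) (rpow_pos_of_pos (sub_pos.2 hη.2) _))
    (fun η hη =>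
      ((hC2.contDiffAt (isOpen_Ioo.mem_nhds hη)).differentiableAt two_ne_zero).hasDerivAt)
    (fun η hη => hC2.hasDerivAt_deriv_deriv isOpen_Ioo hη)
    (fun η _ => hasDerivAt_barrier A₂ d η) (fun η hη => hasDerivAt_barrier_deriv A₂ hη.2)
    (fun η hη => by linarith [hη.2]) (fun η hη => by linarith [heq η hη])
    (fun η hη => barrier_supersolution hcond hη.1.le hη.2)

/-- Lemma 2.3: `φ_max(η) = A₂·η·(d − η)^{3/2}` with `A₂²d² ≥ 8/3` is an upper bound for any
positive solution of `φφ'' = (1/2)(φ')² + η − d` with zero boundary values. -/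
theorem upper_bound_for_first_integral_solution (d : ℝ) (hd : 0 < d) (φ : ℝ → ℝ)
    (hcont : ContinuousOn φ (Set.Icc 0 d))
    (hC2 : ContDiffOn ℝ 2 φ (Set.Ioo 0 d))
    (hpos : ∀ η ∈ Set.Ioo (0:ℝ) d, 0 < φ η)
    (h0 : φ 0 = 0) (hdd : φ d = 0)
    (heq : ∀ η ∈ Set.Ioo (0:ℝ) d,
      φ η * deriv (deriv φ) η = (1/2) * (deriv φ η)^2 + η - d)
    (A₂ : ℝ) (hA : 0 < A₂) (hcond : A₂^2 * d^2 ≥ 8/3) :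
    ∀ η ∈ Set.Icc (0:ℝ) d, φ η ≤ A₂ * η * (d - η) ^ ((3:ℝ)/2) :=
  upper_bound_for_first_integral_solution_general d φ hcont hC2 h0 hdd heq A₂ hA hcond
end
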